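/- arXiv:2004.00260 — 6 statements merged into one kernel-verified Lean document; each statement's English description precedes it below -/
import Mathlib

section
/- Let (μ_k)_{k≥0} be a sequence of real numbers with μ_{2k+1} = 0 for all k ≥ 0, let Δ_n, A_n, B_n be the associated Hankel determinants (with Δ_0 = A_0 = B_0 = 1, Δ_{−1} = 0), and suppose Δ_n ≠ 0 for all n ≥ 1 (equivalently A_n ≠ 0 and B_n ≠ 0 for all n). Define β_n = Δ_{n+1}Δ_{n−1}/Δ_n² for n ≥ 1. Then for every n ≥ 1, β_{2n} = A_{n+1}B_{n−1}/(A_n B_n), and for every n ≥ 0, β_{2n+1} = A_n B_{n+1}/(A_{n+1} B_n). -/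
/-- Interleaving equivalence splitting `Fin m` by parity. -/
def parityEquiv (m : ℕ) : Fin ((m + 1) / 2) ⊕ Fin (m / 2) ≃ Fin m where
  toFun := Sum.elim (fun j => ⟨2 * j, by omega⟩) (fun j => ⟨2 * j + 1, by omega⟩)
  invFun i := if h : (i : ℕ) % 2 = 0 then Sum.inl ⟨(i : ℕ) / 2, by omega⟩
    else Sum.inr ⟨(i : ℕ) / 2, by omega⟩
  left_inv := by
    rintro (⟨j, hj⟩ | ⟨j, hj⟩) <;> dsimp only [Sum.elim_inl, Sum.elim_inr]
    · rw [dif_pos (by omega : (2 * j) % 2 = 0)]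
      exact congrArg Sum.inl (Fin.ext (by simp))
    · rw [dif_neg (by omega : ¬ (2 * j + 1) % 2 = 0)]
      exact congrArg Sum.inr (Fin.ext (by simp; omega))
  right_inv := by
    rintro ⟨i, hi⟩
    dsimp only
    by_cases h : i % 2 = 0
    · rw [dif_pos h]
      exact Fin.ext (by simp; omega)
    · rw [dif_neg h]
      exact Fin.ext (by simp; omega)

/-- For a symmetric real sequence with nonvanishing Hankel determinants, the recurrence
coefficients `β_n = Δ_{n+1}Δ_{n-1}/Δ_n²` satisfy
`β_{2n} = A_{n+1}B_{n-1}/(A_n B_n)` (n ≥ 1) and `β_{2n+1} = A_n B_{n+1}/(A_{n+1} B_n)` (n ≥ 0). -/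
theorem recurrence_coefficients_symmetric
    (μ : ℕ → ℝ) (hμ : ∀ k : ℕ, μ (2 * k + 1) = 0)
    (Δ A B : ℕ → ℝ)
    (hΔ : ∀ n : ℕ, Δ n = Matrix.det (Matrix.of fun j k : Fin n => μ ((j : ℕ) + (k : ℕ))))
    (hA : ∀ n : ℕ, A n = Matrix.det (Matrix.of fun j k : Fin n => μ (2 * (j : ℕ) + 2 * (k : ℕ))))
    (hB : ∀ n : ℕ, B n = Matrix.det (Matrix.of fun j k : Fin n =>
      μ (2 * (j : ℕ) + 2 * (k : ℕ) + 2)))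
    (hΔne : ∀ n : ℕ, 1 ≤ n → Δ n ≠ 0)
    (β : ℕ → ℝ)
    (hβ : ∀ n : ℕ, 1 ≤ n → β n = Δ (n + 1) * Δ (n - 1) / (Δ n) ^ 2) :
    (∀ n : ℕ, 1 ≤ n → β (2 * n) = A (n + 1) * B (n - 1) / (A n * B n)) ∧
    (∀ n : ℕ, β (2 * n + 1) = A n * B (n + 1) / (A (n + 1) * B n)) := by
  have hodd : ∀ p : ℕ, p % 2 = 1 → μ p = 0 := by
    intro p hp
    obtain ⟨k, rfl⟩ : ∃ k, p = 2 * k + 1 := ⟨p / 2, by omega⟩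
    exact hμ k
  have key : ∀ m : ℕ, Δ m = A ((m + 1) / 2) * B (m / 2) := by
    intro m
    rw [hΔ, hA, hB]
    rw [← Matrix.det_submatrix_equiv_self (parityEquiv m)]
    have : (Matrix.of fun j k : Fin m => μ ((j : ℕ) + (k : ℕ))).submatrix
        (parityEquiv m) (parityEquiv m) =
        Matrix.fromBlocks
          (Matrix.of fun j k : Fin ((m + 1) / 2) => μ (2 * (j : ℕ) + 2 * (k : ℕ)))
          0 0
          (Matrix.of fun j k : Fin (m / 2) => μ (2 * (j : ℕ) + 2 * (k : ℕ) + 2)) := by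
      ext (j | j) (k | k) <;>
        simp only [Matrix.submatrix_apply, Matrix.of_apply, parityEquiv, Equiv.coe_fn_mk,
          Sum.elim_inl, Sum.elim_inr, Matrix.fromBlocks_apply₁₁, Matrix.fromBlocks_apply₁₂,
          Matrix.fromBlocks_apply₂₁, Matrix.fromBlocks_apply₂₂, Matrix.zero_apply] <;>
        first
          | exact hodd _ (by omega)
          | rfl
          | (congr 1; omega)
    rw [this, Matrix.det_fromBlocks_zero₁₂]
  have keyE : ∀ n : ℕ, Δ (2 * n) = A n * B n := by
    intro n
    have := key (2 * n)
    rwa [show (2 * n + 1) / 2 = n by omega, show 2 * n / 2 = n by omega] at this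
  have keyO : ∀ n : ℕ, Δ (2 * n + 1) = A (n + 1) * B n := by
    intro n
    have := key (2 * n + 1)
    rwa [show (2 * n + 1 + 1) / 2 = n + 1 by omega, show (2 * n + 1) / 2 = n by omega] at this
  constructor
  · intro n hn
    obtain ⟨m, rfl⟩ : ∃ m, n = m + 1 := ⟨n - 1, by omega⟩
    have hAn : A (m + 1) ≠ 0 := fun h => hΔne (2 * (m + 1)) (by omega) (by rw [keyE, h, zero_mul])
    have hBn : B (m + 1) ≠ 0 := fun h => hΔne (2 * (m + 1)) (by omega) (by rw [keyE, h, mul_zero])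
    rw [hβ (2 * (m + 1)) (by omega),
      show 2 * (m + 1) + 1 = 2 * (m + 1) + 1 from rfl,
      show 2 * (m + 1) - 1 = 2 * m + 1 by omega,
      keyO (m + 1), keyO m, keyE (m + 1),
      show m + 1 + 1 = m + 2 from rfl, show m + 1 - 1 = m from rfl]
    field_simp
  · intro n
    have h1 : Δ (2 * n + 1) ≠ 0 := hΔne _ (by omega)
    rw [keyO] at h1
    have hAn : A (n + 1) ≠ 0 := fun h => h1 (by rw [h, zero_mul])
    have hBn : B n ≠ 0 := fun h => h1 (by rw [h, mul_zero])
    rw [hβ (2 * n + 1) (by omega),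
      show 2 * n + 1 + 1 = 2 * (n + 1) from by ring,
      show 2 * n + 1 - 1 = 2 * n by omega,
      keyE (n + 1), keyE n, keyO n]
    field_simp
end

section
/- Let φ : ℝ → ℝ be infinitely differentiable and define A_n(t) = det[φ^{(j+k)}(t)]_{j,k=0}^{n−1}, B_n(t) = det[φ^{(j+k+1)}(t)]_{j,k=0}^{n−1} with A_0 = B_0 = 1, and assume A_n(t) ≠ 0 and B_n(t) ≠ 0 for all n ≥ 1 and all t. With β_{2n} := A_{n+1}B_{n−1}/(A_n B_n) and β_{2n+1} := A_n B_{n+1}/(A_{n+1} B_n), one has for all t: β_{2n}(t) = d/dt [ln(B_n(t)/A_n(t))] for n ≥ 1, and β_{2n+1}(t) = d/dt [ln(A_{n+1}(t)/B_n(t))] for n ≥ 0. -/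
open Matrix

namespace RecWronski

/-- shifted Hankel matrix of a sequence -/
def Hk (a : ℕ → ℝ) (r m : ℕ) : Matrix (Fin m) (Fin m) ℝ :=
  Matrix.of fun j k => a ((j : ℕ) + (k : ℕ) + r)

/-- Hankel matrix with bumped last row -/
def Hb (a : ℕ → ℝ) (r m : ℕ) : Matrix (Fin m) (Fin m) ℝ :=
  Matrix.of fun j k => a ((if (j : ℕ) = m - 1 then m else (j : ℕ)) + (k : ℕ) + r)

lemma val_succAbove {m : ℕ} (r : Fin (m + 1)) (j : Fin m) :
    ((r.succAbove j : Fin (m + 1)) : ℕ) = if (j : ℕ) < (r : ℕ) then (j : ℕ) else (j : ℕ) + 1 := by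
  rw [Fin.succAbove]
  split_ifs with h1 <;> simp_all [Fin.lt_def]

/-- cofactor evaluation -/
lemma det_updateColumn_single {m : ℕ} (M : Matrix (Fin (m + 1)) (Fin (m + 1)) ℝ)
    (r c : Fin (m + 1)) :
    (M.updateCol c (Pi.single r 1)).det
      = (-1) ^ ((r : ℕ) + (c : ℕ)) * (M.submatrix r.succAbove c.succAbove).det := by
  rw [Matrix.det_succ_column _ c]
  rw [Finset.sum_eq_single r]
  · have h1 : (M.updateCol c (Pi.single r 1)) r c = 1 := by
      simp [Matrix.updateCol_apply]
    have h2 : (M.updateCol c (Pi.single r 1)).submatrix r.succAbove c.succAbove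
        = M.submatrix r.succAbove c.succAbove := by
      ext i j
      simp [Matrix.submatrix_apply, Matrix.updateCol_apply, Fin.succAbove_ne c j]
    rw [h1, h2]; ring
  · intro i _ hir
    have : (M.updateCol c (Pi.single r 1)) i c = 0 := by
      simp [Matrix.updateCol_apply, Pi.single_eq_of_ne hir]
    rw [this]; ring
  · intro h; exact absurd (Finset.mem_univ r) h

/-- Laplace-expansion kernel relation: the signed maximal minors of an (m+1)×m matrix
are a linear relation among its rows. -/
lemma kernel_rel {m : ℕ} (D : Matrix (Fin (m + 1)) (Fin m) ℝ) (k : Fin m) :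
    ∑ r : Fin (m + 1), (-1) ^ (r : ℕ) * (D.submatrix r.succAbove id).det * D r k = 0 := by
  classical
  set E : Matrix (Fin (m + 1)) (Fin (m + 1)) ℝ :=
    Matrix.of fun i j => D i (Fin.lastCases k (fun j' => j') j) with hE
  have hdup : E.det = 0 := by
    apply Matrix.det_zero_of_column_eq (i := Fin.castSucc k) (j := Fin.last m)
    · exact (Fin.castSucc_lt_last k).ne
    · intro i
      simp [hE]
  have hexp := Matrix.det_succ_column E (Fin.last m)
  rw [hdup] at hexp
  have hsub : ∀ i : Fin (m + 1),
      E.submatrix i.succAbove (Fin.last m).succAbove = D.submatrix i.succAbove id := by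
    intro i
    ext a b
    simp [hE, Fin.succAbove_last]
  have hlast : ∀ i, E i (Fin.last m) = D i k := by intro i; simp [hE]
  have hexp' : (0 : ℝ) = ∑ i : Fin (m + 1),
      (-1) ^ ((i : ℕ) + m) * D i k * (D.submatrix i.succAbove id).det := by
    rw [hexp]
    refine Finset.sum_congr rfl fun i _ => ?_
    rw [hsub i, hlast i]
    simp [Fin.val_last]
  have := congrArg (fun x => (-1 : ℝ) ^ m * x) hexp'
  simp only [mul_zero] at this
  rw [Finset.mul_sum] at this
  rw [this]
  refine Finset.sum_congr rfl fun i _ => ?_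
  have hm : ((-1 : ℝ) ^ m) ^ 2 = 1 := by
    rw [← pow_mul, mul_comm, pow_mul]
    norm_num
  rw [pow_add]
  calc (-1 : ℝ) ^ (i:ℕ) * (D.submatrix i.succAbove id).det * D i k
      = ((-1 : ℝ) ^ m) ^ 2 * ((-1) ^ (i:ℕ) * (D.submatrix i.succAbove id).det * D i k) := by
        rw [hm]; ring
    _ = (-1) ^ m * ((-1) ^ (i:ℕ) * (-1) ^ m * D i k * (D.submatrix i.succAbove id).det) := by
        ring


lemma det_updateRow_linear {m : ℕ} (A : Matrix (Fin m) (Fin m) ℝ) (j : Fin m) {ι : Type}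
    [DecidableEq ι] (s : Finset ι) (c : ι → ℝ) (v : ι → Fin m → ℝ) :
    (A.updateRow j (∑ r ∈ s, c r • v r)).det = ∑ r ∈ s, c r * (A.updateRow j (v r)).det := by
  induction s using Finset.induction with
  | empty =>
      simp only [Finset.sum_empty]
      exact Matrix.det_eq_zero_of_row_eq_zero j (by simp)
  | insert _ _ h ih =>
      rw [Finset.sum_insert h, Finset.sum_insert h, Matrix.det_updateRow_add,
        Matrix.det_updateRow_smul, ih]

/-- Three-term splice relation obtained by applying a determinant functional to the
Laplace kernel relation of a rectangular matrix. -/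
lemma splice {m : ℕ} (D : Matrix (Fin (m + 3)) (Fin (m + 2)) ℝ)
    (base : Matrix (Fin (m + 1)) (Fin (m + 1)) ℝ)
    (hmid : ∀ j : Fin (m + 1), (j : ℕ) < m →
      ∀ k : Fin (m + 1), base j k = D ⟨(j : ℕ) + 1, by omega⟩ (Fin.castSucc k)) :
    ∀ g : Fin (m + 3) → ℝ,
    (g = fun r : Fin (m + 3) => (-1) ^ (r : ℕ) * (D.submatrix (Fin.succAbove r) id).det
        * (base.updateRow (Fin.last m) (fun k => D r (Fin.castSucc k))).det) →
    g ⟨0, by omega⟩ + g ⟨m + 1, by omega⟩ + g ⟨m + 2, by omega⟩ = 0 := by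
  intro g hg
  have hsum : ∑ r : Fin (m + 3), g r = 0 := by
    rw [hg]
    have hvec : (∑ r : Fin (m + 3),
        ((-1) ^ (r : ℕ) * (D.submatrix r.succAbove id).det)
          • (fun k : Fin (m + 1) => D r (Fin.castSucc k))) = 0 := by
      funext k
      rw [Finset.sum_apply]
      have := kernel_rel D (Fin.castSucc k)
      simpa using this
    have hlin := det_updateRow_linear base (Fin.last m) Finset.univ
      (fun r : Fin (m + 3) => (-1) ^ (r : ℕ) * (D.submatrix (Fin.succAbove r) id).det)
      (fun r : Fin (m + 3) => (fun k : Fin (m + 1) => D r (Fin.castSucc k)))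
    rw [hvec] at hlin
    rw [← hlin]
    exact Matrix.det_eq_zero_of_row_eq_zero (Fin.last m) (by simp)
  have hzero : ∀ r : Fin (m + 3), 1 ≤ (r : ℕ) → (r : ℕ) ≤ m → g r = 0 := by
    intro r h1 h2
    have hF : (base.updateRow (Fin.last m) (fun k => D r (Fin.castSucc k))).det = 0 := by
      apply Matrix.det_zero_of_row_eq (i := ⟨(r : ℕ) - 1, by omega⟩) (j := Fin.last m)
      · intro h
        have := congrArg Fin.val h
        simp only [Fin.val_last] at this
        omega
      · funext k
        rw [Matrix.updateRow_apply, Matrix.updateRow_apply, if_pos rfl,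
          if_neg (by intro h; have := congrArg Fin.val h; simp only [Fin.val_last] at this; omega)]
        rw [hmid ⟨(r : ℕ) - 1, by omega⟩ (by simpa using by omega) k]
        congr 1
        ext
        simp
        omega
    rw [hg]
    simp only
    rw [hF, mul_zero]
  -- peel the sum
  rw [Fin.sum_univ_castSucc, Fin.sum_univ_castSucc, Fin.sum_univ_succ] at hsum
  have hrest : ∑ r : Fin m,
      g (Fin.castSucc (Fin.castSucc (Fin.succ r))) = 0 := by
    apply Finset.sum_eq_zero
    intro r _
    apply hzero
    · simp
    · simp
  rw [hrest] at hsum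
  have e0 : (Fin.castSucc (Fin.castSucc (0 : Fin (m + 1)))) = (⟨0, by omega⟩ : Fin (m + 3)) := by
    ext; simp
  have e1 : (Fin.castSucc (Fin.last (m + 1))) = (⟨m + 1, by omega⟩ : Fin (m + 3)) := by
    ext; simp
  have e2 : (Fin.last (m + 2)) = (⟨m + 2, by omega⟩ : Fin (m + 3)) := by
    ext; simp
  rw [e0, e1, e2] at hsum
  linarith


lemma I2alg (a : ℕ → ℝ) (n : ℕ) :
    (Hk a 0 (n + 1)).det * (Hk a 1 (n + 2)).det
      = (Hb a 0 (n + 2)).det * (Hk a 1 (n + 1)).det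
        - (Hk a 0 (n + 2)).det * (Hb a 1 (n + 1)).det := by
  have hmid : ∀ j : Fin (n + 1), (j : ℕ) < n → ∀ k : Fin (n + 1),
      (Hk a 1 (n + 1)) j k
        = (Matrix.of fun (r : Fin (n + 3)) (c : Fin (n + 2)) => a ((r : ℕ) + (c : ℕ)))
            ⟨(j : ℕ) + 1, by omega⟩ (Fin.castSucc k) := by
    intro j hj k
    simp only [Hk, Matrix.of_apply, Fin.coe_castSucc]
    congr 1
    omega
  have h := splice (m := n)
    (Matrix.of fun (r : Fin (n + 3)) (c : Fin (n + 2)) => a ((r : ℕ) + (c : ℕ)))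
    (Hk a 1 (n + 1)) hmid _ rfl
  set D : Matrix (Fin (n + 3)) (Fin (n + 2)) ℝ :=
    Matrix.of fun (r : Fin (n + 3)) (c : Fin (n + 2)) => a ((r : ℕ) + (c : ℕ)) with hD
  have hP0 : (D.submatrix (Fin.succAbove ⟨0, by omega⟩) id).det = (Hk a 1 (n + 2)).det := by
    congr 1
    funext j k
    simp only [Matrix.submatrix_apply, hD, Matrix.of_apply, Hk, id_eq]
    rw [val_succAbove]
    simp only [show ((⟨0, by omega⟩ : Fin (n + 3)) : ℕ) = 0 from rfl]
    have := j.isLt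
    congr 1
    split_ifs <;> omega
  have hP1 : (D.submatrix (Fin.succAbove ⟨n + 1, by omega⟩) id).det = (Hb a 0 (n + 2)).det := by
    congr 1
    funext j k
    simp only [Matrix.submatrix_apply, hD, Matrix.of_apply, Hb, id_eq]
    rw [val_succAbove]
    simp only [show ((⟨n + 1, by omega⟩ : Fin (n + 3)) : ℕ) = n + 1 from rfl]
    have := j.isLt
    congr 1
    split_ifs <;> omega
  have hP2 : (D.submatrix (Fin.succAbove ⟨n + 2, by omega⟩) id).det = (Hk a 0 (n + 2)).det := by
    congr 1
    funext j k
    simp only [Matrix.submatrix_apply, hD, Matrix.of_apply, Hk, id_eq]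
    rw [val_succAbove]
    simp only [show ((⟨n + 2, by omega⟩ : Fin (n + 3)) : ℕ) = n + 2 from rfl]
    have := j.isLt
    congr 1
    split_ifs <;> omega
  have hF0 : ((Hk a 1 (n + 1)).updateRow (Fin.last n)
      (fun k => D ⟨0, by omega⟩ (Fin.castSucc k))).det = (-1 : ℝ) ^ n * (Hk a 0 (n + 1)).det := by
    have heq : (Hk a 1 (n + 1)).updateRow (Fin.last n)
        (fun k => D ⟨0, by omega⟩ (Fin.castSucc k))
        = (Hk a 0 (n + 1)).submatrix (finRotate (n + 1)) id := by
      funext j k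
      rw [Matrix.updateRow_apply]
      simp only [Matrix.submatrix_apply, id_eq]
      by_cases hj : j = Fin.last n
      · subst hj
        rw [if_pos rfl]
        simp only [hD, Matrix.of_apply, Hk, Fin.coe_castSucc]
        rw [finRotate_succ_apply]
        have hlz : (Fin.last n + 1 : Fin (n + 1)) = 0 := by
          ext
          simp [Fin.add_def]
        rw [hlz]
        simp only [Fin.val_zero]
        congr 1
      · rw [if_neg hj]
        have hjlt : (j : ℕ) < n := by
          have h1 := j.isLt
          have h2 : (j : ℕ) ≠ n := fun h => hj (Fin.ext (by simpa using h))
          omega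
        simp only [Hk, Matrix.of_apply]
        rw [finRotate_succ_apply]
        have : ((j + 1 : Fin (n + 1)) : ℕ) = (j : ℕ) + 1 := by
          simp [Fin.add_def, Nat.mod_eq_of_lt (by omega : (j : ℕ) + 1 < n + 1)]
        rw [this]
        congr 1
        omega
    rw [heq, Matrix.det_permute, sign_finRotate]
    push_cast
    ring
  have hF1 : ((Hk a 1 (n + 1)).updateRow (Fin.last n)
      (fun k => D ⟨n + 1, by omega⟩ (Fin.castSucc k))).det = (Hk a 1 (n + 1)).det := by
    have heq : (fun k : Fin (n + 1) => D ⟨n + 1, by omega⟩ (Fin.castSucc k))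
        = (Hk a 1 (n + 1)) (Fin.last n) := by
      funext k
      simp only [hD, Matrix.of_apply, Hk, Fin.coe_castSucc, Fin.val_last]
      congr 1
      omega
    rw [heq, Matrix.updateRow_eq_self]
  have hF2 : ((Hk a 1 (n + 1)).updateRow (Fin.last n)
      (fun k => D ⟨n + 2, by omega⟩ (Fin.castSucc k))).det = (Hb a 1 (n + 1)).det := by
    congr 1
    funext j k
    rw [Matrix.updateRow_apply]
    by_cases hj : j = Fin.last n
    · subst hj
      rw [if_pos rfl]
      simp only [hD, Matrix.of_apply, Hb, Fin.coe_castSucc, Fin.val_last]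
      rw [if_pos (by omega)]
      congr 1
      omega
    · rw [if_neg hj]
      have hjlt : (j : ℕ) < n := by
        have h1 := j.isLt
        have h2 : (j : ℕ) ≠ n := fun h => hj (Fin.ext (by simpa using h))
        omega
      simp only [Hk, Hb, Matrix.of_apply]
      rw [if_neg (by omega)]
  rw [hP0, hP1, hP2, hF0, hF1, hF2] at h
  simp only [show ((⟨0, by omega⟩ : Fin (n + 3)) : ℕ) = 0 from rfl,
    show ((⟨n + 1, by omega⟩ : Fin (n + 3)) : ℕ) = n + 1 from rfl,
    show ((⟨n + 2, by omega⟩ : Fin (n + 3)) : ℕ) = n + 2 from rfl] at h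
  have key : (-1 : ℝ) ^ n * ((Hk a 0 (n + 1)).det * (Hk a 1 (n + 2)).det
      - ((Hb a 0 (n + 2)).det * (Hk a 1 (n + 1)).det
        - (Hk a 0 (n + 2)).det * (Hb a 1 (n + 1)).det)) = 0 := by
    rw [pow_succ, pow_succ] at h
    linear_combination h
  rcases mul_eq_zero.mp key with h' | h'
  · exact absurd h' (pow_ne_zero _ (by norm_num))
  · linarith


lemma I1alg (a : ℕ → ℝ) (n : ℕ) (hA1 : (Hk a 0 (n + 1)).det ≠ 0) :
    (Hk a 0 (n + 1)).det * (Hb a 1 (n + 1)).det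
      - (Hb a 0 (n + 1)).det * (Hk a 1 (n + 1)).det
      = (Hk a 0 (n + 2)).det * (Hk a 1 n).det := by
  classical
  set H : Matrix (Fin (n + 2)) (Fin (n + 2)) ℝ := Hk a 0 (n + 2) with hH
  set G : Matrix (Fin (n + 1)) (Fin (n + 1)) ℝ := Hk a 0 (n + 1) with hG
  set x : Fin (n + 2) → ℝ := cramer H (Pi.single 0 1) with hx
  set y : Fin (n + 2) → ℝ := cramer H (Pi.single (Fin.last (n + 1)) 1) with hy
  set mi : Fin (n + 2) := ⟨n, by omega⟩ with hmi
  -- coordinate evaluations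
  have hxl : x (Fin.last (n + 1)) = (-1 : ℝ) ^ (n + 1) * (Hk a 1 (n + 1)).det := by
    rw [hx, cramer_apply, det_updateColumn_single]
    congr 1
    · simp [Fin.val_last]
    · congr 1
      funext j k
      simp only [Matrix.submatrix_apply, hH, Hk, Matrix.of_apply]
      rw [val_succAbove, val_succAbove]
      have hj := j.isLt
      have hk := k.isLt
      congr 1
      simp only [Fin.val_zero, Fin.val_last]
      split_ifs <;> simp_all <;> omega
  have hxm : x mi = (-1 : ℝ) ^ n * (Hb a 1 (n + 1)).det := by
    rw [hx, cramer_apply, det_updateColumn_single]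
    congr 1
    · simp [hmi]
    · rw [← Matrix.det_transpose (Hb a 1 (n + 1))]
      congr 1
      funext j k
      simp only [Matrix.submatrix_apply, hH, Hk, Hb, Matrix.of_apply, Matrix.transpose_apply]
      rw [val_succAbove, val_succAbove]
      have hj := j.isLt
      have hk := k.isLt
      congr 1
      simp only [Fin.val_zero, hmi]
      split_ifs <;> simp_all <;> split_ifs <;> omega
  have hyl : y (Fin.last (n + 1)) = G.det := by
    rw [hy, cramer_apply, det_updateColumn_single]
    have heven : Even ((Fin.last (n + 1) : Fin (n + 2)).val + (Fin.last (n + 1) : Fin (n + 2)).val) :=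
      ⟨(Fin.last (n + 1) : Fin (n + 2)).val, rfl⟩
    rw [Even.neg_one_pow heven, one_mul]
    congr 1
    funext j k
    simp only [Matrix.submatrix_apply, hH, hG, Hk, Matrix.of_apply]
    rw [val_succAbove, val_succAbove]
    have hj := j.isLt
    have hk := k.isLt
    congr 1
    simp only [Fin.val_last]
    split_ifs <;> omega
  have hym : y mi = -(Hb a 0 (n + 1)).det := by
    rw [hy, cramer_apply, det_updateColumn_single]
    have hodd : Odd ((Fin.last (n + 1) : Fin (n + 2)).val + (mi : ℕ)) := by
      simp only [Fin.val_last, hmi]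
      exact ⟨n, by omega⟩
    rw [Odd.neg_one_pow hodd]
    rw [← Matrix.det_transpose (Hb a 0 (n + 1))]
    have hsub : H.submatrix (Fin.succAbove (Fin.last (n + 1))) (Fin.succAbove mi)
        = (Hb a 0 (n + 1)).transpose := by
      funext j k
      simp only [Matrix.submatrix_apply, hH, Hk, Hb, Matrix.of_apply, Matrix.transpose_apply]
      rw [val_succAbove, val_succAbove]
      have hj := j.isLt
      have hk := k.isLt
      congr 1
      simp only [Fin.val_last, hmi]
      split_ifs <;> omega
    rw [hsub]
    ring
  -- the combined vector z and its restriction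
  set z : Fin (n + 2) → ℝ := fun k => y (Fin.last (n + 1)) * x k - x (Fin.last (n + 1)) * y k
    with hz
  have hzlast : z (Fin.last (n + 1)) = 0 := by rw [hz]; ring
  have hHz : H.mulVec z = (H.det * y (Fin.last (n + 1))) • ((Pi.single (0 : Fin (n + 2)) (1 : ℝ)) : Fin (n + 2) → ℝ)
      - (H.det * x (Fin.last (n + 1))) • ((Pi.single (Fin.last (n + 1)) (1 : ℝ)) : Fin (n + 2) → ℝ) := by
    have hzvec : z = y (Fin.last (n + 1)) • x - x (Fin.last (n + 1)) • y := by
      funext k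
      simp [hz, smul_eq_mul]
    rw [hzvec, Matrix.mulVec_sub, Matrix.mulVec_smul, Matrix.mulVec_smul, hx, hy,
      mulVec_cramer, mulVec_cramer]
    funext k
    simp [smul_eq_mul]
    ring
  set z' : Fin (n + 1) → ℝ := fun k => z (Fin.castSucc k) with hz'
  have hGz : G.mulVec z' = (H.det * y (Fin.last (n + 1))) • ((Pi.single (0 : Fin (n + 1)) (1 : ℝ)) : Fin (n + 1) → ℝ) := by
    funext j
    have hrow := congrFun hHz (Fin.castSucc j)
    have hlhs : (H.mulVec z) (Fin.castSucc j) = (G.mulVec z') j := by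
      simp only [Matrix.mulVec, dotProduct]
      rw [Fin.sum_univ_castSucc]
      rw [hzlast, mul_zero, add_zero]
      refine Finset.sum_congr rfl fun k _ => ?_
      congr 1
    rw [hlhs] at hrow
    rw [hrow]
    have h1 : (Pi.single (Fin.last (n + 1)) (1 : ℝ) : Fin (n + 2) → ℝ) (Fin.castSucc j) = 0 := by
      refine Pi.single_eq_of_ne ?_ 1
      intro h
      have := congrArg Fin.val h
      simp only [Fin.coe_castSucc, Fin.val_last] at this
      omega
    have h2 : (Pi.single (0 : Fin (n + 2)) (1 : ℝ) : Fin (n + 2) → ℝ) (Fin.castSucc j)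
        = (Pi.single (0 : Fin (n + 1)) (1 : ℝ) : Fin (n + 1) → ℝ) j := by
      by_cases hj : j = 0
      · subst hj
        simp
      · have ha : (Pi.single (0 : Fin (n + 1)) (1 : ℝ) : Fin (n + 1) → ℝ) j = 0 :=
          Pi.single_eq_of_ne hj 1
        have hb : (Pi.single (0 : Fin (n + 2)) (1 : ℝ) : Fin (n + 2) → ℝ) (Fin.castSucc j) = 0 := by
          refine Pi.single_eq_of_ne ?_ 1
          intro h
          apply hj
          have := congrArg Fin.val h
          simp only [Fin.coe_castSucc, Fin.val_zero] at this
          exact Fin.ext this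
        rw [ha, hb]
    simp only [Pi.sub_apply, Pi.smul_apply, h1, h2, smul_eq_mul, mul_zero, sub_zero]
  -- uniqueness via invertibility of G
  set w : Fin (n + 1) → ℝ :=
    fun k => G.det • z' k - (H.det * y (Fin.last (n + 1))) • (cramer G (Pi.single 0 1)) k with hw
  have hGw : G.mulVec w = 0 := by
    have hwvec : w = G.det • z' - (H.det * y (Fin.last (n + 1))) • cramer G (Pi.single 0 1) := by
      funext k
      simp [hw]
    rw [hwvec, Matrix.mulVec_sub, Matrix.mulVec_smul, Matrix.mulVec_smul, hGz,
      mulVec_cramer]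
    funext k
    simp [smul_eq_mul]
    ring
  have hw0 : w = 0 := by
    have h1 : G⁻¹.mulVec (G.mulVec w) = 0 := by rw [hGw, Matrix.mulVec_zero]
    rwa [Matrix.mulVec_mulVec, Matrix.nonsing_inv_mul G (isUnit_iff_ne_zero.mpr hA1),
      Matrix.one_mulVec] at h1
  have hcoord := congrFun hw0 (Fin.last n)
  -- evaluate the last cramer coordinate
  have hcG : (cramer G (Pi.single 0 1)) (Fin.last n) = (-1 : ℝ) ^ n * (Hk a 1 n).det := by
    rw [cramer_apply, det_updateColumn_single]
    congr 1
    · simp [Fin.val_last]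
    · congr 1
      funext j k
      simp only [Matrix.submatrix_apply, hG, Hk, Matrix.of_apply]
      rw [val_succAbove, val_succAbove]
      have hj := j.isLt
      have hk := k.isLt
      congr 1
      simp only [Fin.val_zero, Fin.val_last]
      split_ifs <;> simp_all <;> omega
  have hcs : Fin.castSucc (Fin.last n) = mi := by
    ext
    simp [hmi]
  have hzm : z' (Fin.last n) = z mi := by
    show z ((Fin.last n).castSucc) = z mi
    rw [hcs]
  simp only [hw, Pi.zero_apply, smul_eq_mul] at hcoord
  rw [hzm, hcG] at hcoord
  have hzmi : z mi = y (Fin.last (n + 1)) * x mi - x (Fin.last (n + 1)) * y mi := by rw [hz]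
  rw [hzmi, hxl, hxm, hyl, hym] at hcoord
  -- now pure algebra
  have hstep : G.det * ((-1 : ℝ) ^ n *
      ((Hk a 0 (n + 1)).det * (Hb a 1 (n + 1)).det
        - (Hb a 0 (n + 1)).det * (Hk a 1 (n + 1)).det
        - (Hk a 0 (n + 2)).det * (Hk a 1 n).det)) = 0 := by
    rw [hG] at hyl ⊢
    rw [pow_succ] at hcoord
    rw [hH] at hcoord
    linear_combination hcoord
  rcases mul_eq_zero.mp hstep with h' | h'
  · rw [hG] at h'; exact absurd h' hA1
  · rcases mul_eq_zero.mp h' with h'' | h''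
    · exact absurd h'' (pow_ne_zero _ (by norm_num))
    · linarith


/-- Derivative of a determinant of a matrix-valued function. -/
lemma hasDerivAt_det {t : ℝ} : ∀ {m : ℕ} (M : ℝ → Matrix (Fin m) (Fin m) ℝ)
    (M' : Matrix (Fin m) (Fin m) ℝ),
    (∀ i j, HasDerivAt (fun s => M s i j) (M' i j) t) →
    HasDerivAt (fun s => (M s).det) (∑ i, ((M t).updateRow i (M' i)).det) t := by
  intro m
  induction m with
  | zero =>
      intro M M' _
      simp only [Matrix.det_fin_zero, Finset.univ_eq_empty, Finset.sum_empty]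
      exact hasDerivAt_const t 1
  | succ m ih =>
      intro M M' hM
      have hfun : (fun s => (M s).det)
          = fun s => ∑ k : Fin (m + 1), (-1) ^ (k : ℕ) * M s 0 k
              * ((M s).submatrix Fin.succ k.succAbove).det := by
        funext s
        rw [Matrix.det_succ_row_zero]
      rw [hfun]
      have hterm : ∀ k : Fin (m + 1), HasDerivAt
          (fun s => (-1) ^ (k : ℕ) * M s 0 k * ((M s).submatrix Fin.succ k.succAbove).det)
          ((-1) ^ (k : ℕ) * (M' 0 k * ((M t).submatrix Fin.succ k.succAbove).det
            + M t 0 k * ∑ i : Fin m, (((M t).submatrix Fin.succ k.succAbove).updateRow i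
                (fun k' => M' (Fin.succ i) (k.succAbove k'))).det)) t := by
        intro k
        have hsub : HasDerivAt (fun s => ((M s).submatrix Fin.succ k.succAbove).det)
            (∑ i : Fin m, (((M t).submatrix Fin.succ k.succAbove).updateRow i
              (fun k' => M' (Fin.succ i) (k.succAbove k'))).det) t := by
          have := ih (fun s => (M s).submatrix Fin.succ k.succAbove)
            (M'.submatrix Fin.succ k.succAbove)
            (fun i j => hM (Fin.succ i) (k.succAbove j))
          convert this using 2
          rfl
        have hprod := ((hM 0 k).mul hsub).const_mul ((-1 : ℝ) ^ (k : ℕ))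
        have hfe : (fun s => (-1) ^ (k : ℕ) * M s 0 k * ((M s).submatrix Fin.succ k.succAbove).det)
            = fun s => (-1) ^ (k : ℕ) * (M s 0 k * ((M s).submatrix Fin.succ k.succAbove).det) := by
          funext s
          ring
        rw [hfe]
        exact hprod
      have hsum := HasDerivAt.fun_sum (fun k (_ : k ∈ Finset.univ) => hterm k)
      refine hsum.congr_deriv ?_
      symm
      rw [Fin.sum_univ_succ]
      -- first piece: the updateRow-0 determinant
      have h0 : ((M t).updateRow 0 (M' 0)).det
          = ∑ k : Fin (m + 1), (-1) ^ (k : ℕ) * M' 0 k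
              * ((M t).submatrix Fin.succ k.succAbove).det := by
        rw [Matrix.det_succ_row_zero]
        refine Finset.sum_congr rfl fun k _ => ?_
        have hs : ((M t).updateRow 0 (M' 0)).submatrix Fin.succ k.succAbove
            = (M t).submatrix Fin.succ k.succAbove := by
          funext i j
          rw [Matrix.submatrix_apply, Matrix.submatrix_apply,
            Matrix.updateRow_ne (Fin.succ_ne_zero i)]
        rw [Matrix.updateRow_self, hs]
      -- other pieces
      have hrest : ∀ i : Fin m, ((M t).updateRow (Fin.succ i) (M' (Fin.succ i))).det
          = ∑ k : Fin (m + 1), (-1) ^ (k : ℕ) * M t 0 k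
              * (((M t).submatrix Fin.succ k.succAbove).updateRow i
                  (fun k' => M' (Fin.succ i) (k.succAbove k'))).det := by
        intro i
        rw [Matrix.det_succ_row_zero]
        refine Finset.sum_congr rfl fun k _ => ?_
        have hs : ((M t).updateRow (Fin.succ i) (M' (Fin.succ i))).submatrix Fin.succ k.succAbove
            = ((M t).submatrix Fin.succ k.succAbove).updateRow i
                (fun k' => M' (Fin.succ i) (k.succAbove k')) := by
          funext j l
          rw [Matrix.submatrix_apply, Matrix.updateRow_apply, Matrix.updateRow_apply]
          by_cases hji : j = i
          · subst hji
            rw [if_pos rfl, if_pos rfl]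
          · rw [if_neg hji, if_neg (fun h => hji (Fin.succ_injective m h)),
              Matrix.submatrix_apply]
        rw [Matrix.updateRow_ne (Ne.symm (Fin.succ_ne_zero i)), hs]
      rw [h0]
      simp only [hrest]
      rw [Finset.sum_comm]
      rw [← Finset.sum_add_distrib]
      refine Finset.sum_congr rfl fun k _ => ?_
      rw [← Finset.mul_sum]
      ring


lemma hasDerivAt_Hk_det (φ : ℝ → ℝ) (hφ : ContDiff ℝ (⊤ : ℕ∞) φ) (r m : ℕ) (t : ℝ) :
    HasDerivAt (fun s => (Hk (fun i => iteratedDeriv i φ s) r (m + 1)).det)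
      ((Hb (fun i => iteratedDeriv i φ t) r (m + 1)).det) t := by
  have hder : ∀ q : ℕ, HasDerivAt (iteratedDeriv q φ) (iteratedDeriv (q + 1) φ t) t := by
    intro q
    rw [iteratedDeriv_succ]
    exact ((hφ.differentiable_iteratedDeriv q (by exact_mod_cast ENat.coe_lt_top q)) t).hasDerivAt
  have hM := hasDerivAt_det (fun s => Hk (fun i => iteratedDeriv i φ s) r (m + 1))
      (Matrix.of fun j k : Fin (m + 1) => iteratedDeriv ((j : ℕ) + (k : ℕ) + r + 1) φ t)
      (fun i j => by
        simpa only [Hk, Matrix.of_apply] using hder ((i : ℕ) + (j : ℕ) + r))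
  convert hM using 1
  rw [Finset.sum_eq_single (Fin.last m)]
  · congr 1
    funext j k
    rw [Matrix.updateRow_apply]
    by_cases hj : j = Fin.last m
    · subst hj
      rw [if_pos rfl]
      simp only [Hb, Matrix.of_apply, Fin.val_last]
      rw [if_pos (by omega)]
      congr 1
      omega
    · rw [if_neg hj]
      have hjlt : (j : ℕ) < m := by
        have h1 := j.isLt
        have h2 : (j : ℕ) ≠ m := fun h => hj (Fin.ext (by simpa using h))
        omega
      simp only [Hk, Hb, Matrix.of_apply]
      rw [if_neg (by omega)]
  · intro i _ hi
    have hilt : (i : ℕ) < m := by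
      have h1 := i.isLt
      have h2 : (i : ℕ) ≠ m := fun h => hi (Fin.ext (by simpa using h))
      omega
    apply Matrix.det_zero_of_row_eq (i := i) (j := ⟨(i : ℕ) + 1, by omega⟩)
    · intro h
      have := congrArg Fin.val h
      simp only at this
      omega
    · funext k
      rw [Matrix.updateRow_apply, Matrix.updateRow_apply, if_pos rfl,
        if_neg (by intro h; have := congrArg Fin.val h; simp only at this; omega)]
      simp only [Hk, Matrix.of_apply]
      congr 1
      omega
  · intro h
    exact absurd (Finset.mem_univ _) h


end RecWronski

open RecWronski in
/-- For nonvanishing Wronskian determinants `A_n(t) = det[φ^{(j+k)}(t)]` and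
`B_n(t) = det[φ^{(j+k+1)}(t)]` of a smooth function `φ`, the recurrence coefficients
`β_{2n} = A_{n+1}B_{n−1}/(A_n B_n)` and `β_{2n+1} = A_n B_{n+1}/(A_{n+1} B_n)` are
logarithmic derivatives: `β_{2n}(t) = d/dt ln(B_n/A_n)` and
`β_{2n+1}(t) = d/dt ln(A_{n+1}/B_n)`. -/
theorem recurrence_coefficients_log_derivative
    (φ : ℝ → ℝ) (hφ : ContDiff ℝ (⊤ : ℕ∞) φ)
    (A B : ℕ → ℝ → ℝ)
    (hA : ∀ (n : ℕ) (t : ℝ), A n t =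
      Matrix.det (Matrix.of fun j k : Fin n => iteratedDeriv ((j : ℕ) + (k : ℕ)) φ t))
    (hB : ∀ (n : ℕ) (t : ℝ), B n t =
      Matrix.det (Matrix.of fun j k : Fin n => iteratedDeriv ((j : ℕ) + (k : ℕ) + 1) φ t))
    (hAne : ∀ n : ℕ, 1 ≤ n → ∀ t : ℝ, A n t ≠ 0)
    (hBne : ∀ n : ℕ, 1 ≤ n → ∀ t : ℝ, B n t ≠ 0) :
    (∀ n : ℕ, 1 ≤ n → ∀ t : ℝ,
      A (n + 1) t * B (n - 1) t / (A n t * B n t)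
        = deriv (fun s : ℝ => Real.log (B n s / A n s)) t) ∧
    (∀ (n : ℕ) (t : ℝ),
      A n t * B (n + 1) t / (A (n + 1) t * B n t)
        = deriv (fun s : ℝ => Real.log (A (n + 1) s / B n s)) t) := by
  have hca : ∀ (n : ℕ) (t : ℝ), A n t = (Hk (fun i => iteratedDeriv i φ t) 0 n).det := by
    intro n t
    rw [hA]
    rfl
  have hcb : ∀ (n : ℕ) (t : ℝ), B n t = (Hk (fun i => iteratedDeriv i φ t) 1 n).det := by
    intro n t
    rw [hB]
    rfl
  constructor
  · -- part 1
    intro n hn t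
    obtain ⟨N, rfl⟩ : ∃ N, n = N + 1 := ⟨n - 1, by omega⟩
    have hA1 : (Hk (fun i => iteratedDeriv i φ t) 0 (N + 1)).det ≠ 0 := by
      rw [← hca]; exact hAne (N + 1) (by omega) t
    have hB1 : (Hk (fun i => iteratedDeriv i φ t) 1 (N + 1)).det ≠ 0 := by
      rw [← hcb]; exact hBne (N + 1) (by omega) t
    have hfun : (fun s => Real.log (B (N + 1) s / A (N + 1) s))
        = fun s => Real.log ((Hk (fun i => iteratedDeriv i φ s) 1 (N + 1)).det
            / (Hk (fun i => iteratedDeriv i φ s) 0 (N + 1)).det) := by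
      funext s
      rw [hca, hcb]
    have hq : HasDerivAt (fun s => (Hk (fun i => iteratedDeriv i φ s) 1 (N + 1)).det
        / (Hk (fun i => iteratedDeriv i φ s) 0 (N + 1)).det)
        (((Hb (fun i => iteratedDeriv i φ t) 1 (N + 1)).det * (Hk (fun i => iteratedDeriv i φ t) 0 (N + 1)).det
          - (Hk (fun i => iteratedDeriv i φ t) 1 (N + 1)).det * (Hb (fun i => iteratedDeriv i φ t) 0 (N + 1)).det)
            / (Hk (fun i => iteratedDeriv i φ t) 0 (N + 1)).det ^ 2) t :=
      (hasDerivAt_Hk_det φ hφ 1 N t).div (hasDerivAt_Hk_det φ hφ 0 N t) hA1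
    have hlog := hq.log (div_ne_zero hB1 hA1)
    rw [hfun, hlog.deriv]
    have hsub : N + 1 - 1 = N := by omega
    rw [hsub, hca (N + 2) t, hcb N t, hca (N + 1) t, hcb (N + 1) t]
    have hI1 := I1alg (fun i => iteratedDeriv i φ t) N hA1
    have hnum : (Hb (fun i => iteratedDeriv i φ t) 1 (N + 1)).det * (Hk (fun i => iteratedDeriv i φ t) 0 (N + 1)).det
        - (Hk (fun i => iteratedDeriv i φ t) 1 (N + 1)).det * (Hb (fun i => iteratedDeriv i φ t) 0 (N + 1)).det
        = (Hk (fun i => iteratedDeriv i φ t) 0 (N + 2)).det * (Hk (fun i => iteratedDeriv i φ t) 1 N).det := by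
      linear_combination hI1
    have hrew : ((Hb (fun i => iteratedDeriv i φ t) 1 (N + 1)).det * (Hk (fun i => iteratedDeriv i φ t) 0 (N + 1)).det
        - (Hk (fun i => iteratedDeriv i φ t) 1 (N + 1)).det * (Hb (fun i => iteratedDeriv i φ t) 0 (N + 1)).det)
          / (Hk (fun i => iteratedDeriv i φ t) 0 (N + 1)).det ^ 2
          / ((Hk (fun i => iteratedDeriv i φ t) 1 (N + 1)).det / (Hk (fun i => iteratedDeriv i φ t) 0 (N + 1)).det)
        = ((Hb (fun i => iteratedDeriv i φ t) 1 (N + 1)).det * (Hk (fun i => iteratedDeriv i φ t) 0 (N + 1)).det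
          - (Hk (fun i => iteratedDeriv i φ t) 1 (N + 1)).det * (Hb (fun i => iteratedDeriv i φ t) 0 (N + 1)).det)
            / ((Hk (fun i => iteratedDeriv i φ t) 0 (N + 1)).det * (Hk (fun i => iteratedDeriv i φ t) 1 (N + 1)).det) := by
      field_simp
    rw [hrew, hnum]
  · -- part 2
    intro n t
    rcases n with _ | N
    · -- n = 0
      have hA0 : ∀ s : ℝ, A 0 s = 1 := fun s => by rw [hA]; exact Matrix.det_fin_zero
      have hB0 : ∀ s : ℝ, B 0 s = 1 := fun s => by rw [hB]; exact Matrix.det_fin_zero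
      have hA1 : ∀ s : ℝ, A 1 s = φ s := by
        intro s
        rw [hA, Matrix.det_fin_one]
        simp
      have hB1 : B 1 t = deriv φ t := by
        rw [hB, Matrix.det_fin_one]
        simp [iteratedDeriv_one]
      have hfun : (fun s => Real.log (A 1 s / B 0 s)) = fun s => Real.log (φ s) := by
        funext s
        rw [hA1, hB0, div_one]
      have hφt : φ t ≠ 0 := by rw [← hA1]; exact hAne 1 le_rfl t
      have hd : HasDerivAt (fun s => Real.log (φ s)) (deriv φ t / φ t) t :=
        ((hφ.differentiable (by simp) t).hasDerivAt).log hφt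
      rw [hfun, hd.deriv, hA0, hB0, hA1, hB1]
      rw [one_mul, mul_one]
    · -- n = N + 1
      have hA2 : (Hk (fun i => iteratedDeriv i φ t) 0 (N + 2)).det ≠ 0 := by
        rw [← hca]; exact hAne (N + 2) (by omega) t
      have hB1 : (Hk (fun i => iteratedDeriv i φ t) 1 (N + 1)).det ≠ 0 := by
        rw [← hcb]; exact hBne (N + 1) (by omega) t
      have hfun : (fun s => Real.log (A (N + 2) s / B (N + 1) s))
          = fun s => Real.log ((Hk (fun i => iteratedDeriv i φ s) 0 (N + 2)).det
              / (Hk (fun i => iteratedDeriv i φ s) 1 (N + 1)).det) := by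
        funext s
        rw [hca, hcb]
      have hq : HasDerivAt (fun s => (Hk (fun i => iteratedDeriv i φ s) 0 (N + 2)).det
          / (Hk (fun i => iteratedDeriv i φ s) 1 (N + 1)).det)
          (((Hb (fun i => iteratedDeriv i φ t) 0 (N + 2)).det * (Hk (fun i => iteratedDeriv i φ t) 1 (N + 1)).det
            - (Hk (fun i => iteratedDeriv i φ t) 0 (N + 2)).det * (Hb (fun i => iteratedDeriv i φ t) 1 (N + 1)).det)
              / (Hk (fun i => iteratedDeriv i φ t) 1 (N + 1)).det ^ 2) t :=
        (hasDerivAt_Hk_det φ hφ 0 (N + 1) t).div (hasDerivAt_Hk_det φ hφ 1 N t) hB1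
      have hlog := hq.log (div_ne_zero hA2 hB1)
      rw [hfun, hlog.deriv]
      rw [hca (N + 1) t, hcb (N + 2) t, hca (N + 2) t, hcb (N + 1) t]
      have hI2 := I2alg (fun i => iteratedDeriv i φ t) N
      have hrew : ((Hb (fun i => iteratedDeriv i φ t) 0 (N + 2)).det * (Hk (fun i => iteratedDeriv i φ t) 1 (N + 1)).det
          - (Hk (fun i => iteratedDeriv i φ t) 0 (N + 2)).det * (Hb (fun i => iteratedDeriv i φ t) 1 (N + 1)).det)
            / (Hk (fun i => iteratedDeriv i φ t) 1 (N + 1)).det ^ 2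
            / ((Hk (fun i => iteratedDeriv i φ t) 0 (N + 2)).det / (Hk (fun i => iteratedDeriv i φ t) 1 (N + 1)).det)
          = ((Hb (fun i => iteratedDeriv i φ t) 0 (N + 2)).det * (Hk (fun i => iteratedDeriv i φ t) 1 (N + 1)).det
            - (Hk (fun i => iteratedDeriv i φ t) 0 (N + 2)).det * (Hb (fun i => iteratedDeriv i φ t) 1 (N + 1)).det)
              / ((Hk (fun i => iteratedDeriv i φ t) 0 (N + 2)).det * (Hk (fun i => iteratedDeriv i φ t) 1 (N + 1)).det) := by
        field_simp
      rw [hrew, ← hI2]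
end

section
/- For λ > −1 let μ₀(t;λ) = ∫_0^{∞} s^{λ} exp(t s − s³) ds. Then μ₀(·;λ) is three times differentiable on ℝ and satisfies the third-order linear differential equation d³μ₀/dt³ − (t/3) dμ₀/dt − ((λ+1)/3) μ₀ = 0 for all t ∈ ℝ, with initial values μ₀(0;λ) = Γ((λ+1)/3)/3, (dμ₀/dt)(0;λ) = Γ((λ+2)/3)/3 and (d²μ₀/dt²)(0;λ) = Γ((λ+3)/3)/3, where Γ denotes the Gamma function. -/
/-!
Write `M a t = ∫₀^∞ s^a e^{ts - s³} ds` (`cubicExpMoment`), so `μ₀ = M λ`. Since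
`ts - s³ ≤ (t² + 1)/2 - s³/2`, the integrand is dominated locally uniformly in `t` by an
integrable function for every `a > -1`; differentiating under the integral sign gives
`∂ₜ M a = M (a + 1)`, hence `μ₀^{(k)} = M (λ + k)`. Integrating
`d/ds (s^{λ+1} e^{ts - s³}) = ((λ+1) s^λ + t s^{λ+1} - 3 s^{λ+3}) e^{ts - s³}`
over `(0, ∞)` gives `3 M (λ+3) = t M (λ+1) + (λ+1) M λ`, which is the differential equation;
the boundary term vanishes at `0` because `λ + 1 > 0`, and at `∞` because both
`s^{λ+1} e^{ts - s³}` and its derivative are integrable. At `t = 0` the substitution `u = s³`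
turns `M a 0` into `Γ((a+1)/3)/3`.
-/

open MeasureTheory Set Real Filter

noncomputable def cubicExpMoment (a t : ℝ) : ℝ :=
  ∫ s in Ioi 0, s ^ a * exp (t * s - s ^ 3)

lemma mul_sub_cube_le (t : ℝ) {s : ℝ} (hs : 0 ≤ s) :
    t * s - s ^ 3 ≤ (t ^ 2 + 1) / 2 - s ^ 3 / 2 := by
  nlinarith [sq_nonneg (t - s), sq_nonneg (s - 1), mul_nonneg (sq_nonneg (s - 1)) hs]

lemma continuousOn_rpow_mul_exp_mul_sub_cube (a t : ℝ) :
    ContinuousOn (fun s : ℝ => s ^ a * exp (t * s - s ^ 3)) (Ioi 0) :=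
  (continuousOn_id.rpow_const fun _ hs => Or.inl (ne_of_gt hs)).mul (by fun_prop)

lemma integrableOn_rpow_mul_exp_mul_sub_cube {a : ℝ} (ha : -1 < a) (t : ℝ) :
    IntegrableOn (fun s : ℝ => s ^ a * exp (t * s - s ^ 3)) (Ioi 0) := by
  refine ((integrableOn_rpow_mul_exp_neg_mul_rpow ha three_pos one_half_pos).const_mul
    (exp ((t ^ 2 + 1) / 2))).mono'
    ((continuousOn_rpow_mul_exp_mul_sub_cube a t).aestronglyMeasurable measurableSet_Ioi) ?_
  filter_upwards [ae_restrict_mem measurableSet_Ioi] with s (hs : 0 < s)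
  have hsa : 0 ≤ s ^ a := rpow_nonneg hs.le a
  rw [norm_of_nonneg (by positivity), rpow_ofNat, mul_left_comm, ← exp_add]
  gcongr
  linarith [mul_sub_cube_le t hs.le]

theorem hasDerivAt_cubicExpMoment {a : ℝ} (ha : -1 < a) (t₀ : ℝ) :
    HasDerivAt (cubicExpMoment a) (cubicExpMoment (a + 1) t₀) t₀ := by
  have hbound : ∀ᵐ s ∂volume.restrict (Ioi 0), ∀ t ∈ Metric.ball t₀ 1,
      ‖s ^ (a + 1) * exp (t * s - s ^ 3)‖ ≤ s ^ (a + 1) * exp ((|t₀| + 1) * s - s ^ 3) := by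
    filter_upwards [ae_restrict_mem measurableSet_Ioi] with s (hs : 0 < s) t ht
    have ht' : t ≤ |t₀| + 1 := by
      rw [Metric.mem_ball, dist_eq] at ht
      linarith [le_abs_self (t - t₀), le_abs_self t₀]
    rw [norm_of_nonneg (by positivity)]
    gcongr
  have hderiv : ∀ᵐ s ∂volume.restrict (Ioi 0), ∀ t ∈ Metric.ball t₀ 1,
      HasDerivAt (fun t => s ^ a * exp (t * s - s ^ 3))
        (s ^ (a + 1) * exp (t * s - s ^ 3)) t := by
    filter_upwards [ae_restrict_mem measurableSet_Ioi] with s (hs : 0 < s) t _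
    refine ((((hasDerivAt_id t).mul_const s).sub_const (s ^ 3)).exp.const_mul
      (s ^ a)).congr_deriv ?_
    rw [rpow_add_one hs.ne', id, one_mul]
    ring
  exact (hasDerivAt_integral_of_dominated_loc_of_deriv_le (Metric.ball_mem_nhds t₀ one_pos)
    (Eventually.of_forall fun t =>
      (continuousOn_rpow_mul_exp_mul_sub_cube a t).aestronglyMeasurable measurableSet_Ioi)
    (integrableOn_rpow_mul_exp_mul_sub_cube ha t₀)
    ((continuousOn_rpow_mul_exp_mul_sub_cube (a + 1) t₀).aestronglyMeasurable measurableSet_Ioi)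
    hbound (integrableOn_rpow_mul_exp_mul_sub_cube (by linarith) _) hderiv).2

theorem differentiable_cubicExpMoment {a : ℝ} (ha : -1 < a) :
    Differentiable ℝ (cubicExpMoment a) :=
  fun t => (hasDerivAt_cubicExpMoment ha t).differentiableAt

theorem deriv_cubicExpMoment {a : ℝ} (ha : -1 < a) :
    deriv (cubicExpMoment a) = cubicExpMoment (a + 1) :=
  funext fun t => (hasDerivAt_cubicExpMoment ha t).deriv

lemma hasDerivAt_rpow_add_one_mul_exp_mul_sub_cube (a t : ℝ) {s : ℝ} (hs : 0 < s) :
    HasDerivAt (fun s : ℝ => s ^ (a + 1) * exp (t * s - s ^ 3))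
      ((a + 1) * (s ^ a * exp (t * s - s ^ 3)) + t * (s ^ (a + 1) * exp (t * s - s ^ 3))
        - 3 * (s ^ (a + 3) * exp (t * s - s ^ 3))) s := by
  have hpow : HasDerivAt (fun s : ℝ => s ^ (a + 1)) ((a + 1) * s ^ a) s := by
    simpa using hasDerivAt_rpow_const (p := a + 1) (Or.inl hs.ne')
  have hexp : HasDerivAt (fun s => t * s - s ^ 3) (t - 3 * s ^ 2) s := by
    simpa using ((hasDerivAt_id' s).const_mul t).fun_sub (hasDerivAt_pow 3 s)
  refine (hpow.mul hexp.exp).congr_deriv ?_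
  rw [show a + 3 = a + 1 + (2 : ℕ) by push_cast; ring, rpow_add_natCast hs.ne']
  ring

theorem cubicExpMoment_add_three {a : ℝ} (ha : -1 < a) (t : ℝ) :
    cubicExpMoment (a + 3) t =
      t / 3 * cubicExpMoment (a + 1) t + (a + 1) / 3 * cubicExpMoment a t := by
  have int₀ := integrableOn_rpow_mul_exp_mul_sub_cube ha t
  have int₁ := integrableOn_rpow_mul_exp_mul_sub_cube (a := a + 1) (by linarith) t
  have int₃ := integrableOn_rpow_mul_exp_mul_sub_cube (a := a + 3) (by linarith) t
  have hderiv := fun s (hs : s ∈ Ioi (0 : ℝ)) =>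
    hasDerivAt_rpow_add_one_mul_exp_mul_sub_cube a t hs
  have f'int := ((int₀.const_mul (a + 1)).add (int₁.const_mul t)).sub (int₃.const_mul 3)
  have hcont : ContinuousWithinAt (fun s : ℝ => s ^ (a + 1) * exp (t * s - s ^ 3)) (Ici 0) 0 :=
    ((continuousAt_rpow_const 0 (a + 1) (Or.inr (by linarith))).mul
      (by fun_prop)).continuousWithinAt
  have hFTC := integral_Ioi_of_hasDerivAt_of_tendsto hcont hderiv f'int
    (tendsto_zero_of_hasDerivAt_of_integrableOn_Ioi hderiv f'int int₁)
  rw [integral_sub, integral_add, integral_const_mul, integral_const_mul, integral_const_mul,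
    zero_rpow (by linarith), zero_mul, sub_zero] at hFTC
  · unfold cubicExpMoment
    linarith
  exacts [int₀.const_mul _, int₁.const_mul _, (int₀.const_mul _).add (int₁.const_mul _),
    int₃.const_mul _]

theorem cubicExpMoment_zero {a : ℝ} (ha : -1 < a) :
    cubicExpMoment a 0 = Gamma ((a + 1) / 3) / 3 := by
  have hcube (s : ℝ) : s ^ a * exp (0 * s - s ^ 3) = s ^ a * exp (-s ^ (3 : ℝ)) := by
    rw [rpow_ofNat, zero_mul, zero_sub]
  simp only [cubicExpMoment, hcube, integral_rpow_mul_exp_neg_rpow three_pos ha]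
  ring

/-- The first moment `μ₀(t;λ) = ∫_0^∞ s^λ exp(ts − s³) ds` of the generalised sextic
Freud weight is three times differentiable and satisfies the third-order equation
`μ₀''' − (t/3) μ₀' − ((λ+1)/3) μ₀ = 0`, with initial values given by Gamma functions. -/
theorem sextic_freud_moment_ode (l : ℝ) (hl : -1 < l)
    (μ₀ : ℝ → ℝ)
    (hμ₀ : ∀ t : ℝ, μ₀ t = ∫ s in Set.Ioi (0 : ℝ), s ^ l * Real.exp (t * s - s ^ 3)) :
    (Differentiable ℝ μ₀ ∧ Differentiable ℝ (deriv μ₀) ∧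
      Differentiable ℝ (deriv (deriv μ₀))) ∧
    (∀ t : ℝ, deriv (deriv (deriv μ₀)) t - t / 3 * deriv μ₀ t - (l + 1) / 3 * μ₀ t = 0) ∧
    μ₀ 0 = Real.Gamma ((l + 1) / 3) / 3 ∧
    deriv μ₀ 0 = Real.Gamma ((l + 2) / 3) / 3 ∧
    deriv (deriv μ₀) 0 = Real.Gamma ((l + 3) / 3) / 3 := by
  have hμ : μ₀ = cubicExpMoment l := funext hμ₀
  have h₁ : deriv μ₀ = cubicExpMoment (l + 1) := hμ ▸ deriv_cubicExpMoment hl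
  have h₂ : deriv (deriv μ₀) = cubicExpMoment (l + 2) := by
    rw [h₁, deriv_cubicExpMoment (by linarith), add_assoc, one_add_one_eq_two]
  have h₃ : deriv (deriv (deriv μ₀)) = cubicExpMoment (l + 3) := by
    rw [h₂, deriv_cubicExpMoment (by linarith), add_assoc, two_add_one_eq_three]
  refine ⟨⟨hμ ▸ differentiable_cubicExpMoment hl,
    h₁ ▸ differentiable_cubicExpMoment (by linarith),
    h₂ ▸ differentiable_cubicExpMoment (by linarith)⟩, fun t => ?_, ?_, ?_, ?_⟩
  · rw [h₃, h₁, hμ, cubicExpMoment_add_three hl]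
    ring
  · rw [hμ, cubicExpMoment_zero hl]
  · rw [h₁, cubicExpMoment_zero (by linarith), add_assoc, one_add_one_eq_two]
  · rw [h₂, cubicExpMoment_zero (by linarith), add_assoc, two_add_one_eq_three]
end

section
/- For λ > −1, define β₁(t;λ) = μ₂(t;λ)/μ₀(t;λ), where μ₀(t;λ) = ∫_0^{∞} s^{λ} exp(ts − s³) ds and μ₂(t;λ) = ∫_0^{∞} s^{λ+1} exp(ts − s³) ds. Then β₁(·;λ) is twice differentiable on ℝ and satisfies the second-order nonlinear differential equation β₁'' + 3 β₁ β₁' + β₁³ − (t/3) β₁ = (λ + 1)/3 for all t ∈ ℝ, where primes denote differentiation with respect to t. -/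
/-!
Differentiating under the integral sign gives `∂ₜ ∫₀^∞ sᵖ e^{ts - s³} ds = ∫₀^∞ sᵖ⁺¹ e^{ts - s³} ds`,
so `μ₂ = μ₀'`, `β₁ = μ₀'/μ₀` is a logarithmic derivative, and any such `β = y'/y` satisfies
`β'' + 3ββ' + β³ = y'''/y`. Integration by parts turns `μ₀''' = ∫ s^{λ+3} e^{ts - s³} ds` into
`(t μ₀' + (λ + 1) μ₀)/3`, which is the equation.
-/

open MeasureTheory Set Filter Real

section

variable {𝕜 : Type*} [NontriviallyNormedField 𝕜] {m₀ m₁ m₂ m₃ : 𝕜 → 𝕜}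

theorem HasDerivAt.fun_div' {f g : 𝕜 → 𝕜} {f' g' x : 𝕜}
    (hf : HasDerivAt f f' x) (hg : HasDerivAt g g' x) (hx : g x ≠ 0) :
    HasDerivAt (fun y => f y / g y) (f' / g x - f x / g x * (g' / g x)) x := by
  refine (hf.fun_div hg hx).congr_deriv ?_
  field_simp

theorem ratio_deriv_third_order_identity (h₀ : ∀ t, HasDerivAt m₀ (m₁ t) t)
    (h₁ : ∀ t, HasDerivAt m₁ (m₂ t) t) (h₂ : ∀ t, HasDerivAt m₂ (m₃ t) t)
    (hne : ∀ t, m₀ t ≠ 0) :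
    (Differentiable 𝕜 (fun t => m₁ t / m₀ t) ∧
        Differentiable 𝕜 (deriv fun t => m₁ t / m₀ t)) ∧
      ∀ t, deriv (deriv fun t => m₁ t / m₀ t) t
          + 3 * (m₁ t / m₀ t) * deriv (fun t => m₁ t / m₀ t) t + (m₁ t / m₀ t) ^ 3
        = m₃ t / m₀ t := by
  set β := fun t => m₁ t / m₀ t
  set γ := fun t => m₂ t / m₀ t
  have hβ t : HasDerivAt β (γ t - β t * β t) t := (h₁ t).fun_div' (h₀ t) (hne t)
  have hγ t : HasDerivAt γ (m₃ t / m₀ t - γ t * β t) t :=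
    (h₂ t).fun_div' (h₀ t) (hne t)
  have hβ' : deriv β = fun t => γ t - β t * β t := funext fun t => (hβ t).deriv
  have hβ'' t : HasDerivAt (deriv β)
      (m₃ t / m₀ t - γ t * β t - ((γ t - β t * β t) * β t + β t * (γ t - β t * β t))) t := by
    rw [hβ']
    exact (hγ t).sub ((hβ t).mul (hβ t))
  refine ⟨⟨fun t => (hβ t).differentiableAt, fun t => (hβ'' t).differentiableAt⟩, fun t => ?_⟩
  rw [(hβ'' t).deriv, hβ']
  ring

end

namespace SexticFreud

/-- `μ₀ = moment λ` and `μ₂ = moment (λ + 1)`. -/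
noncomputable def moment (p t : ℝ) : ℝ := ∫ s in Ioi (0 : ℝ), s ^ p * exp (t * s - s ^ 3)

theorem mul_sub_cube_le {t s : ℝ} (hs : 0 ≤ s) : t * s - s ^ 3 ≤ (|t| + 1) ^ 2 - s := by
  have hts : t * s ≤ |t| * s := mul_le_mul_of_nonneg_right (le_abs_self t) hs
  rcases le_or_gt s (|t| + 1) with h | h
  · nlinarith [abs_nonneg t, pow_nonneg hs 3]
  · have hs1 : 1 < s := by linarith [abs_nonneg t]
    nlinarith [mul_lt_mul_of_pos_left h (by linarith : (0 : ℝ) < s)]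

theorem rpow_mul_exp_le {p t s : ℝ} (hs : 0 ≤ s) :
    s ^ p * exp (t * s - s ^ 3) ≤ exp ((|t| + 1) ^ 2) * (s ^ p * exp (-s)) := by
  calc s ^ p * exp (t * s - s ^ 3) ≤ s ^ p * exp ((|t| + 1) ^ 2 - s) := by
        gcongr ?_ * exp ?_
        exact mul_sub_cube_le hs
    _ = exp ((|t| + 1) ^ 2) * (s ^ p * exp (-s)) := by
        rw [sub_eq_add_neg, exp_add]; ring

theorem continuousOn_rpow_mul_exp (p t : ℝ) :
    ContinuousOn (fun s : ℝ => s ^ p * exp (t * s - s ^ 3)) (Ioi 0) :=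
  fun s hs => ((continuousAt_rpow_const s p (Or.inl (ne_of_gt hs))).mul
    (by fun_prop)).continuousWithinAt

theorem integrableOn_rpow_mul_exp {p : ℝ} (hp : -1 < p) (t : ℝ) :
    IntegrableOn (fun s : ℝ => s ^ p * exp (t * s - s ^ 3)) (Ioi 0) := by
  have hGamma : IntegrableOn (fun s : ℝ => exp ((|t| + 1) ^ 2) * (s ^ p * exp (-s))) (Ioi 0) := by
    refine IntegrableOn.congr_fun ((GammaIntegral_convergent (s := p + 1) (by linarith)).const_mul
      (exp ((|t| + 1) ^ 2))) (fun s _ => ?_) measurableSet_Ioi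
    simp only [add_sub_cancel_right, mul_comm (exp (-s))]
  refine hGamma.mono' ((continuousOn_rpow_mul_exp p t).aestronglyMeasurable measurableSet_Ioi) ?_
  filter_upwards [ae_restrict_mem measurableSet_Ioi] with s (hs : 0 < s)
  rw [norm_of_nonneg (by positivity)]
  exact rpow_mul_exp_le hs.le

theorem moment_pos {p : ℝ} (hp : -1 < p) (t : ℝ) : 0 < moment p t := by
  rw [moment, setIntegral_pos_iff_support_of_nonneg_ae _ (integrableOn_rpow_mul_exp hp t)]
  · have : Ioi (0 : ℝ) ⊆ Function.support fun s : ℝ => s ^ p * exp (t * s - s ^ 3) :=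
      fun s (hs : 0 < s) => (mul_pos (rpow_pos_of_pos hs p) (exp_pos _)).ne'
    rw [inter_eq_right.2 this]
    simp
  · filter_upwards [ae_restrict_mem measurableSet_Ioi] with s (hs : 0 < s)
    positivity

theorem hasDerivAt_moment {p : ℝ} (hp : -1 < p) (t : ℝ) :
    HasDerivAt (moment p) (moment (p + 1) t) t := by
  have hbound : ∀ᵐ s ∂volume.restrict (Ioi 0), ∀ u ∈ Metric.ball t 1,
      ‖s ^ (p + 1) * exp (u * s - s ^ 3)‖ ≤ s ^ (p + 1) * exp ((|t| + 1) * s - s ^ 3) := by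
    filter_upwards [ae_restrict_mem measurableSet_Ioi] with s (hs : 0 < s) u hu
    have hut : u ≤ |t| + 1 := by
      rw [Metric.mem_ball, dist_eq_norm] at hu
      linarith [norm_sub_norm_le u t, le_abs_self u, Real.norm_eq_abs u, Real.norm_eq_abs t]
    rw [norm_of_nonneg (by positivity)]
    gcongr
  have hderiv : ∀ᵐ s ∂volume.restrict (Ioi 0), ∀ u ∈ Metric.ball t 1,
      HasDerivAt (fun u => s ^ p * exp (u * s - s ^ 3)) (s ^ (p + 1) * exp (u * s - s ^ 3)) u := by
    filter_upwards [ae_restrict_mem measurableSet_Ioi] with s (hs : 0 < s) u _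
    refine (((hasDerivAt_mul_const s).sub_const (s ^ 3)).exp.const_mul (s ^ p)).congr_deriv ?_
    rw [rpow_add_one hs.ne']
    ring
  exact (hasDerivAt_integral_of_dominated_loc_of_deriv_le (Metric.ball_mem_nhds t one_pos)
    (.of_forall fun u => (continuousOn_rpow_mul_exp p u).aestronglyMeasurable measurableSet_Ioi)
    (integrableOn_rpow_mul_exp hp t)
    ((continuousOn_rpow_mul_exp (p + 1) t).aestronglyMeasurable measurableSet_Ioi)
    hbound (integrableOn_rpow_mul_exp (by linarith) (|t| + 1)) hderiv).2

theorem tendsto_rpow_mul_exp_atTop (p t : ℝ) :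
    Tendsto (fun s : ℝ => s ^ p * exp (t * s - s ^ 3)) atTop (nhds 0) := by
  have hdom := (tendsto_rpow_mul_exp_neg_mul_atTop_nhds_zero p 1 one_pos).const_mul
    (exp ((|t| + 1) ^ 2))
  rw [mul_zero] at hdom
  refine squeeze_zero' ?_ ?_ hdom
  · filter_upwards [Ioi_mem_atTop 0] with s (hs : 0 < s)
    positivity
  · filter_upwards [Ioi_mem_atTop 0] with s (hs : 0 < s)
    simpa only [neg_one_mul] using rpow_mul_exp_le (p := p) (t := t) hs.le

theorem hasDerivAt_rpow_add_one_mul_exp {p t s : ℝ} (hs : 0 < s) :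
    HasDerivAt (fun s : ℝ => s ^ (p + 1) * exp (t * s - s ^ 3))
      ((p + 1) * (s ^ p * exp (t * s - s ^ 3)) + t * (s ^ (p + 1) * exp (t * s - s ^ 3))
        - 3 * (s ^ (p + 3) * exp (t * s - s ^ 3))) s := by
  have hpow : HasDerivAt (fun s : ℝ => s ^ (p + 1)) ((p + 1) * s ^ p) s := by
    simpa using hasDerivAt_rpow_const (x := s) (p := p + 1) (Or.inl hs.ne')
  have hexp : HasDerivAt (fun s : ℝ => exp (t * s - s ^ 3))
      (exp (t * s - s ^ 3) * (t - 3 * s ^ 2)) s := by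
    simpa using (((hasDerivAt_id s).const_mul t).sub (hasDerivAt_pow 3 s)).exp
  have hp3 : s ^ (p + 3) = s ^ (p + 1) * s ^ 2 := by
    rw [← rpow_natCast s 2, ← rpow_add hs]
    norm_num [add_assoc]
  refine (hpow.mul hexp).congr_deriv ?_
  rw [hp3]
  ring

/-- Integration by parts against `d/ds e^{ts - s³} = (t - 3s²) e^{ts - s³}`; the boundary terms
vanish because `p + 1 > 0`. -/
theorem three_mul_moment_add_three {p : ℝ} (hp : -1 < p) (t : ℝ) :
    3 * moment (p + 3) t = t * moment (p + 1) t + (p + 1) * moment p t := by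
  have h₀ := (integrableOn_rpow_mul_exp hp t).const_mul (p + 1)
  have h₁ := (integrableOn_rpow_mul_exp (p := p + 1) (by linarith) t).const_mul t
  have h₃ := (integrableOn_rpow_mul_exp (p := p + 3) (by linarith) t).const_mul 3
  have hcont : ContinuousWithinAt (fun s : ℝ => s ^ (p + 1) * exp (t * s - s ^ 3)) (Ici 0) 0 :=
    ((continuousAt_rpow_const 0 (p + 1) (Or.inr (by linarith))).mul
      (by fun_prop)).continuousWithinAt
  have hftc := integral_Ioi_of_hasDerivAt_of_tendsto hcont
    (fun s hs => hasDerivAt_rpow_add_one_mul_exp hs) ((h₀.fun_add h₁).sub' h₃)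
    (tendsto_rpow_mul_exp_atTop (p + 1) t)
  rw [integral_sub (h₀.fun_add h₁) h₃, integral_add h₀ h₁, integral_const_mul, integral_const_mul,
    integral_const_mul, zero_rpow (by linarith), zero_mul, sub_zero] at hftc
  simp only [moment]
  linarith

end SexticFreud

open SexticFreud

/-- The first recurrence coefficient `β₁(t;λ) = μ₂(t;λ)/μ₀(t;λ)` of the generalised
sextic Freud weight is twice differentiable and satisfies
`β₁'' + 3β₁β₁' + β₁³ − (t/3)β₁ = (λ+1)/3`. -/
theorem sextic_freud_beta_one_ode (l : ℝ) (hl : -1 < l)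
    (μ₀ μ₂ β₁ : ℝ → ℝ)
    (hμ₀ : ∀ t : ℝ, μ₀ t = ∫ s in Set.Ioi (0 : ℝ), s ^ l * Real.exp (t * s - s ^ 3))
    (hμ₂ : ∀ t : ℝ, μ₂ t = ∫ s in Set.Ioi (0 : ℝ), s ^ (l + 1) * Real.exp (t * s - s ^ 3))
    (hβ₁ : ∀ t : ℝ, β₁ t = μ₂ t / μ₀ t) :
    (Differentiable ℝ β₁ ∧ Differentiable ℝ (deriv β₁)) ∧
    ∀ t : ℝ, deriv (deriv β₁) t + 3 * β₁ t * deriv β₁ t + (β₁ t) ^ 3 - t / 3 * β₁ t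
      = (l + 1) / 3 := by
  have hβ : β₁ = fun t => moment (l + 1) t / moment l t := funext fun t => by
    rw [hβ₁, hμ₀, hμ₂, moment, moment]
  have h₁ t : HasDerivAt (moment (l + 1)) (moment (l + 2) t) t := by
    simpa only [add_assoc, one_add_one_eq_two] using hasDerivAt_moment (p := l + 1) (by linarith) t
  have h₂ t : HasDerivAt (moment (l + 2)) (moment (l + 3) t) t := by
    simpa only [add_assoc, two_add_one_eq_three] using hasDerivAt_moment (p := l + 2) (by linarith) t
  obtain ⟨hdiff, hode⟩ := ratio_deriv_third_order_identity (hasDerivAt_moment hl) h₁ h₂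
    fun t => (moment_pos hl t).ne'
  subst hβ
  refine ⟨hdiff, fun t => ?_⟩
  rw [hode t]
  field_simp [(moment_pos hl t).ne']
  linarith [three_mul_moment_add_three hl t]
end

section
/- For λ > −1 and t ∈ ℝ, the first moment of the generalised octic Freud weight satisfies ∫_{−∞}^{∞} |x|^{2λ+1} exp(−x⁸ + t x²) dx = ∫_0^{∞} s^{λ} exp(−s⁴ + t s) ds =: μ₀(t;λ); the function μ₀(·;λ) satisfies the fourth-order linear differential equation d⁴μ₀/dt⁴ − (t/4) dμ₀/dt − ((λ+1)/4) μ₀ = 0 on ℝ; and the first recurrence coefficient β₁(t;λ) = (dμ₀/dt)/μ₀ satisfies the third-order nonlinear equation β₁''' + 4 β₁ β₁'' + 3(β₁')² + 6 β₁² β₁' + β₁⁴ − (t/4) β₁ = (λ+1)/4 for all t ∈ ℝ, where primes denote differentiation with respect to t. -/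
/-!
Substituting `s = x²` folds the even octic weight onto the half-line, where
`μ₀(t;λ) = ∫₀^∞ s^λ e^{-s⁴+ts} ds` is the moment generating function of the measure
`s^λ e^{-s⁴} ds` on `(0, ∞)`. Hence `μ₀` is smooth and `μ₀⁽ⁿ⁾(t;λ) = μ₀(t;λ+n)`, while integrating
`(s^{λ+1} e^{-s⁴+ts})'` over `(0, ∞)` gives `4 μ₀(t;λ+4) = (λ+1) μ₀(t;λ) + t μ₀(t;λ+1)`, the
fourth-order equation. Finally `β₁ = (log μ₀)'` and `μ₀⁽⁴⁾/μ₀` is the complete Bell polynomial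
`B₄(β₁, β₁', β₁'', β₁''')`, which turns the linear equation into the nonlinear one.
-/

open MeasureTheory ProbabilityTheory Real Set Filter
open scoped ENNReal

lemma integral_abs_rpow_mul_comp_sq (l : ℝ) (g : ℝ → ℝ) :
    ∫ x, |x| ^ (2 * l + 1) * g (x ^ 2) = ∫ s in Ioi 0, s ^ l * g s := by
  have habs := integral_comp_abs (f := fun x => x ^ (2 * l + 1) * g (x ^ 2))
  simp only [sq_abs] at habs
  rw [habs, ← integral_comp_rpow_Ioi_of_pos (g := fun s => s ^ l * g s) two_pos,
    ← integral_const_mul]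
  refine setIntegral_congr_fun measurableSet_Ioi fun x (hx : 0 < x) => ?_
  rw [rpow_ofNat, ← rpow_natCast, ← rpow_mul hx.le, rpow_add_one hx.ne', smul_eq_mul]
  norm_num
  ring

section LogDeriv

variable {f : ℝ → ℝ}

lemma hasDerivAt_iteratedDeriv_div_self (hf : ContDiff ℝ 4 f) (hf0 : ∀ t, f t ≠ 0) {k : ℕ}
    (hk : k < 4) (t : ℝ) :
    HasDerivAt (fun t => iteratedDeriv k f t / f t)
      (iteratedDeriv (k + 1) f t / f t - iteratedDeriv k f t / f t * logDeriv f t) t := by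
  have hD : ∀ j < 4, HasDerivAt (iteratedDeriv j f) (iteratedDeriv (j + 1) f t) t := fun j hj => by
    rw [iteratedDeriv_succ]
    exact (hf.differentiable_iteratedDeriv j (by exact_mod_cast hj) t).hasDerivAt
  have h0 : HasDerivAt f (deriv f t) t := by simpa using hD 0 (by norm_num)
  refine ((hD k hk).div h0 (hf0 t)).congr_deriv ?_
  rw [logDeriv_apply]
  field_simp

lemma iteratedDeriv_four_div_self (hf : ContDiff ℝ 4 f) (hf0 : ∀ t, f t ≠ 0) (t : ℝ) :
    iteratedDeriv 4 f t / f t = iteratedDeriv 3 (logDeriv f) t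
      + 4 * logDeriv f t * iteratedDeriv 2 (logDeriv f) t + 3 * deriv (logDeriv f) t ^ 2
      + 6 * logDeriv f t ^ 2 * deriv (logDeriv f) t + logDeriv f t ^ 4 := by
  set r : ℕ → ℝ → ℝ := fun k t => iteratedDeriv k f t / f t with hr
  have hb : logDeriv f = r 1 := by
    funext t
    simp [hr, logDeriv_apply]
  have hd : ∀ k < 4, ∀ t, HasDerivAt (r k) (r (k + 1) t - r k t * r 1 t) t := fun k hk t => by
    have := hasDerivAt_iteratedDeriv_div_self hf hf0 hk t
    rwa [hb] at this
  have d1 : deriv (r 1) = fun t => r 2 t - r 1 t ^ 2 :=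
    funext fun t => ((hd 1 (by norm_num) t).congr_deriv (by ring)).deriv
  have d2 : deriv (fun t => r 2 t - r 1 t ^ 2)
      = fun t => r 3 t - 3 * r 1 t * r 2 t + 2 * r 1 t ^ 3 :=
    funext fun t => (((hd 2 (by norm_num) t).sub ((hd 1 (by norm_num) t).pow 2)).congr_deriv
      (by push_cast; ring)).deriv
  have d3 : deriv (fun t => r 3 t - 3 * r 1 t * r 2 t + 2 * r 1 t ^ 3) = fun t =>
      r 4 t - 4 * r 1 t * r 3 t - 3 * r 2 t ^ 2 + 12 * r 1 t ^ 2 * r 2 t - 6 * r 1 t ^ 4 :=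
    funext fun t => ((((hd 3 (by norm_num) t).sub (((hd 1 (by norm_num) t).const_mul 3).mul
      (hd 2 (by norm_num) t))).add (((hd 1 (by norm_num) t).pow 3).const_mul 2)).congr_deriv
      (by push_cast; ring)).deriv
  have i2 : iteratedDeriv 2 (r 1) = deriv (deriv (r 1)) := by
    simp only [iteratedDeriv_eq_iterate, Function.iterate_succ_apply', Function.iterate_zero_apply]
  have i3 : iteratedDeriv 3 (r 1) = deriv (deriv (deriv (r 1))) := by
    simp only [iteratedDeriv_eq_iterate, Function.iterate_succ_apply', Function.iterate_zero_apply]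
  rw [hb, i3, i2, d1, d2, d3]
  simp only [hr]
  ring

end LogDeriv

noncomputable section

def quarticMoment (e t : ℝ) : ℝ := ∫ s in Ioi 0, s ^ e * exp (-s ^ 4 + t * s)

def quarticWeight (e : ℝ) : Measure ℝ :=
  (volume.restrict (Ioi 0)).withDensity fun s => (s ^ e * exp (-s ^ 4)).toNNReal

end

section QuarticMoment

variable {e : ℝ}

lemma mul_le_quartic (t s : ℝ) : t * s ≤ s ^ 4 / 4 + t ^ 2 / 2 + 1 / 4 := by
  nlinarith [sq_nonneg (t - s), sq_nonneg (s ^ 2 - 1)]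

lemma integrableOn_rpow_mul_exp_quartic (he : -1 < e) (t : ℝ) :
    IntegrableOn (fun s => s ^ e * exp (-s ^ 4 + t * s)) (Ioi 0) := by
  have hdom : IntegrableOn
      (fun s : ℝ => exp (t ^ 2 / 2 + 1 / 4) * (s ^ e * exp (-(3 / 4) * s ^ (4 : ℝ)))) (Ioi 0) :=
    (integrableOn_rpow_mul_exp_neg_mul_rpow he (by norm_num) (by norm_num)).const_mul _
  refine hdom.mono' (by fun_prop) (ae_restrict_of_forall_mem measurableSet_Ioi fun s hs => ?_)
  have hs : 0 < s := hs
  rw [norm_of_nonneg (by positivity), rpow_ofNat, mul_left_comm, ← exp_add]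
  gcongr _ * exp ?_
  linarith [mul_le_quartic t s]

lemma quarticMoment_pos (he : -1 < e) (t : ℝ) : 0 < quarticMoment e t := by
  have hpos : ∀ s ∈ Ioi (0 : ℝ), 0 < s ^ e * exp (-s ^ 4 + t * s) := fun s (hs : 0 < s) => by
    positivity
  rw [quarticMoment, setIntegral_pos_iff_support_of_nonneg_ae
      (ae_restrict_of_forall_mem measurableSet_Ioi fun s hs => (hpos s hs).le)
      (integrableOn_rpow_mul_exp_quartic he t)]
  calc (0 : ℝ≥0∞) < volume (Ioi (0 : ℝ)) := by simp
    _ ≤ _ := measure_mono (subset_inter (fun s hs => (hpos s hs).ne') subset_rfl)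

lemma hasDerivAt_rpow_mul_exp_quartic (t : ℝ) {s : ℝ} (hs : 0 < s) :
    HasDerivAt (fun s => s ^ (e + 1) * exp (-s ^ 4 + t * s))
      ((e + 1) * (s ^ e * exp (-s ^ 4 + t * s)) + t * (s ^ (e + 1) * exp (-s ^ 4 + t * s))
        - 4 * (s ^ (e + 4) * exp (-s ^ 4 + t * s))) s := by
  have hpow := hasDerivAt_rpow_const (p := e + 1) (Or.inl hs.ne')
  have hexp : HasDerivAt (fun s => exp (-s ^ 4 + t * s))
      (exp (-s ^ 4 + t * s) * (-(↑4 * s ^ (4 - 1)) + t * 1)) s :=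
    ((hasDerivAt_pow 4 s).neg.add ((hasDerivAt_id' s).const_mul t)).exp
  have h4 : s ^ (e + 4) = s ^ (e + 1) * s ^ 3 := by
    rw [show e + 4 = e + 1 + (3 : ℕ) by push_cast; ring, rpow_add_natCast hs.ne']
  refine (hpow.mul hexp).congr_deriv ?_
  simp only [add_sub_cancel_right, h4]
  push_cast
  ring

lemma quarticMoment_add_four (he : -1 < e) (t : ℝ) :
    4 * quarticMoment (e + 4) t = (e + 1) * quarticMoment e t + t * quarticMoment (e + 1) t := by
  have hi : ∀ k : ℝ, 0 ≤ k → IntegrableOn (fun s => s ^ (e + k) * exp (-s ^ 4 + t * s)) (Ioi 0) :=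
    fun k hk => integrableOn_rpow_mul_exp_quartic (by linarith) t
  have hA := (integrableOn_rpow_mul_exp_quartic he t).const_mul (e + 1)
  have hB := (hi 1 zero_le_one).const_mul t
  have hC := (hi 4 (by norm_num)).const_mul 4
  have hint := (hA.add hB).sub hC
  have hderiv := fun s (hs : s ∈ Ioi (0 : ℝ)) => hasDerivAt_rpow_mul_exp_quartic (e := e) t hs
  have hcont : ContinuousWithinAt (fun s => s ^ (e + 1) * exp (-s ^ 4 + t * s)) (Ici 0) 0 :=
    ((continuousAt_rpow_const 0 (e + 1) (Or.inr (by linarith))).mul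
      (by fun_prop)).continuousWithinAt
  have hlim := integral_Ioi_of_hasDerivAt_of_tendsto hcont hderiv hint
    (tendsto_zero_of_hasDerivAt_of_integrableOn_Ioi hderiv hint (hi 1 zero_le_one))
  rw [integral_sub (by exact hA.add hB) hC, integral_add hA hB, integral_const_mul,
    integral_const_mul, integral_const_mul, zero_rpow (by linarith), zero_mul, sub_zero] at hlim
  simp only [quarticMoment]
  linarith

lemma measurable_quarticWeight_density :
    Measurable fun s : ℝ => (s ^ e * exp (-s ^ 4)).toNNReal := by
  fun_prop

lemma integral_quarticWeight (g : ℝ → ℝ) :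
    ∫ x, g x ∂quarticWeight e = ∫ s in Ioi 0, s ^ e * exp (-s ^ 4) * g s := by
  rw [quarticWeight, integral_withDensity_eq_integral_smul measurable_quarticWeight_density]
  refine setIntegral_congr_fun measurableSet_Ioi fun s (hs : 0 < s) => ?_
  rw [NNReal.smul_def, Real.coe_toNNReal _ (by positivity), smul_eq_mul]

lemma integrable_quarticWeight_iff (g : ℝ → ℝ) :
    Integrable g (quarticWeight e) ↔
      IntegrableOn (fun s => s ^ e * exp (-s ^ 4) * g s) (Ioi 0) := by
  rw [quarticWeight, integrable_withDensity_iff_integrable_smul measurable_quarticWeight_density]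
  refine integrableOn_congr_fun (fun s (hs : 0 < s) => ?_) measurableSet_Ioi
  rw [NNReal.smul_def, Real.coe_toNNReal _ (by positivity), smul_eq_mul]

lemma rpow_mul_exp_quartic_eq (n : ℕ) (t : ℝ) {s : ℝ} (hs : 0 < s) :
    s ^ e * exp (-s ^ 4) * (s ^ n * exp (t * s)) = s ^ (e + n) * exp (-s ^ 4 + t * s) := by
  rw [rpow_add_natCast hs.ne', exp_add]
  ring

lemma integral_pow_mul_exp_quarticWeight (n : ℕ) (t : ℝ) :
    ∫ x, x ^ n * exp (t * x) ∂quarticWeight e = quarticMoment (e + n) t := by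
  rw [integral_quarticWeight]
  exact setIntegral_congr_fun measurableSet_Ioi fun s hs => rpow_mul_exp_quartic_eq n t hs

lemma mgf_quarticWeight : mgf id (quarticWeight e) = quarticMoment e := by
  funext t
  simpa [mgf] using integral_pow_mul_exp_quarticWeight (e := e) 0 t

lemma integrableExpSet_quarticWeight (he : -1 < e) :
    integrableExpSet id (quarticWeight e) = univ := by
  refine eq_univ_of_forall fun t => (integrable_quarticWeight_iff _).mpr ?_
  refine (integrableOn_rpow_mul_exp_quartic he t).congr_fun (fun s (hs : 0 < s) => ?_)
    measurableSet_Ioi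
  simpa using (rpow_mul_exp_quartic_eq (e := e) 0 t hs).symm

lemma contDiff_quarticMoment (he : -1 < e) {n : WithTop ℕ∞} :
    ContDiff ℝ n (quarticMoment e) := by
  have := analyticOn_mgf (X := id) (μ := quarticWeight e)
  rw [integrableExpSet_quarticWeight he, interior_univ, mgf_quarticWeight] at this
  exact this.contDiff

lemma iteratedDeriv_quarticMoment (he : -1 < e) (n : ℕ) (t : ℝ) :
    iteratedDeriv n (quarticMoment e) t = quarticMoment (e + n) t := by
  rw [← mgf_quarticWeight, iteratedDeriv_mgf (by simp [integrableExpSet_quarticWeight he])]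
  exact integral_pow_mul_exp_quarticWeight n t

lemma iteratedDeriv_four_quarticMoment (he : -1 < e) (t : ℝ) :
    iteratedDeriv 4 (quarticMoment e) t
      = t / 4 * deriv (quarticMoment e) t + (e + 1) / 4 * quarticMoment e t := by
  rw [iteratedDeriv_quarticMoment he, ← iteratedDeriv_one, iteratedDeriv_quarticMoment he]
  push_cast
  linarith [quarticMoment_add_four he t]

end QuarticMoment

/-- For the generalised octic Freud weight `|x|^{2λ+1} exp(−x⁸ + t x²)`: the first moment
equals `μ₀(t;λ) = ∫_0^∞ s^λ exp(−s⁴ + ts) ds`; `μ₀` satisfies the fourth-order equation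
`μ₀'''' − (t/4)μ₀' − ((λ+1)/4)μ₀ = 0`; and `β₁ = μ₀'/μ₀` satisfies
`β₁''' + 4β₁β₁'' + 3(β₁')² + 6β₁²β₁' + β₁⁴ − (t/4)β₁ = (λ+1)/4`. -/
theorem octic_freud_moment_and_beta_one (l : ℝ) (hl : -1 < l)
    (μ₀ β₁ : ℝ → ℝ)
    (hμ₀ : ∀ t : ℝ, μ₀ t = ∫ s in Set.Ioi (0 : ℝ), s ^ l * Real.exp (-s ^ 4 + t * s))
    (hβ₁ : ∀ t : ℝ, β₁ t = deriv μ₀ t / μ₀ t) :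
    (∀ t : ℝ, (∫ x : ℝ, |x| ^ (2 * l + 1) * Real.exp (-x ^ 8 + t * x ^ 2)) = μ₀ t) ∧
    (∀ t : ℝ, iteratedDeriv 4 μ₀ t - t / 4 * deriv μ₀ t - (l + 1) / 4 * μ₀ t = 0) ∧
    (∀ t : ℝ, iteratedDeriv 3 β₁ t + 4 * β₁ t * iteratedDeriv 2 β₁ t
        + 3 * (deriv β₁ t) ^ 2 + 6 * (β₁ t) ^ 2 * deriv β₁ t + (β₁ t) ^ 4
        - t / 4 * β₁ t = (l + 1) / 4) := by
  obtain rfl : μ₀ = quarticMoment l := funext hμ₀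
  obtain rfl : β₁ = logDeriv (quarticMoment l) := funext hβ₁
  refine ⟨fun t => ?_, fun t => ?_, fun t => ?_⟩
  · rw [quarticMoment, ← integral_abs_rpow_mul_comp_sq]
    simp only [← pow_mul]
  · rw [iteratedDeriv_four_quarticMoment hl]
    ring
  · have hμ : quarticMoment l t ≠ 0 := (quarticMoment_pos hl t).ne'
    rw [← iteratedDeriv_four_div_self (contDiff_quarticMoment hl)
      (fun t => (quarticMoment_pos hl t).ne') t, iteratedDeriv_four_quarticMoment hl,
      logDeriv_apply]
    field_simp
    ring
end

section
/- For λ > −1 and t ∈ ℝ, the first moment of the generalised decic Freud weight satisfies ∫_{−∞}^{∞} |x|^{2λ+1} exp(−x^{10} + t x²) dx = ∫_0^{∞} s^{λ} exp(−s⁵ + t s) ds =: μ₀(t;λ); the function μ₀(·;λ) satisfies the fifth-order linear differential equation d⁵μ₀/dt⁵ − (t/5) dμ₀/dt − ((λ+1)/5) μ₀ = 0 on ℝ; and the first recurrence coefficient β₁(t;λ) = (dμ₀/dt)/μ₀ satisfies the fourth-order nonlinear equation β₁'''' + 5 β₁ β₁''' + 10(β₁' + β₁²) β₁'' + 15 β₁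 (β₁')² + 10 β₁³ β₁' + β₁⁵ − (t/5) β₁ = (λ+1)/5 for all t ∈ ℝ, where primes denote differentiation with respect to t. -/
/-!
Substituting `s = x²` folds the weight onto the half line, where
`F c t = ∫₀^∞ s^c exp(-s⁵ + ts) ds` satisfies `∂ₜ F c = F (c + 1)` (differentiation under the
integral sign) and `5 F (c + 5) = t F (c + 1) + (c + 1) F c` (integrate
`d/ds (s^(c+1) exp(-s⁵ + ts))` over `(0, ∞)`). Hence `μ₀⁽ⁿ⁾ = F (λ + n)`, and the recursion at
`c = λ` is the linear fifth-order equation.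

Since `μ₀' = β₁ μ₀`, Leibniz's rule gives `μ₀⁽ⁿ⁺¹⁾ = ∑ₖ C(n,k) β₁⁽ᵏ⁾ μ₀⁽ⁿ⁻ᵏ⁾`, so `μ₀⁽⁵⁾ / μ₀` is
the fifth complete Bell polynomial in `β₁, β₁', …, β₁''''`, which is the left-hand side of the
nonlinear equation without its `-(t/5) β₁` term. Dividing the linear equation by `μ₀ > 0` gives the
nonlinear one.
-/

open MeasureTheory Set Filter Asymptotics Topology
open scoped ContDiff

section DerivEqMul

variable {𝕜 : Type*} [NontriviallyNormedField 𝕜] {β μ : 𝕜 → 𝕜}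

theorem iteratedDeriv_succ_eq_sum_of_deriv_eq_mul {n : ℕ} {x : 𝕜}
    (hβ : ContDiffAt 𝕜 n β x) (hμ : ContDiffAt 𝕜 n μ x) (h : deriv μ = β * μ) :
    iteratedDeriv (n + 1) μ x = ∑ k ∈ Finset.range (n + 1),
      n.choose k * iteratedDeriv k β x * iteratedDeriv (n - k) μ x := by
  rw [iteratedDeriv_succ', h, iteratedDeriv_mul hβ hμ]

theorem iteratedDeriv_five_eq_of_deriv_eq_mul (hβ : ContDiff 𝕜 4 β) (hμ : ContDiff 𝕜 4 μ)
    (h : deriv μ = β * μ) (x : 𝕜) :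
    iteratedDeriv 5 μ x = (iteratedDeriv 4 β x + 5 * β x * iteratedDeriv 3 β x
        + 10 * (deriv β x + β x ^ 2) * iteratedDeriv 2 β x
        + 15 * β x * deriv β x ^ 2 + 10 * β x ^ 3 * deriv β x + β x ^ 5) * μ x := by
  have step (n : ℕ) (hn : n ≤ 4) := iteratedDeriv_succ_eq_sum_of_deriv_eq_mul (x := x)
    (hβ.of_le (by exact_mod_cast hn)).contDiffAt (hμ.of_le (by exact_mod_cast hn)).contDiffAt h
  have h1 := step 0 (by norm_num)
  have h2 := step 1 (by norm_num)
  have h3 := step 2 (by norm_num)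
  have h4 := step 3 (by norm_num)
  have h5 := step 4 (by norm_num)
  simp only [Finset.sum_range_succ, Finset.sum_range_zero, Nat.choose, iteratedDeriv_zero,
    iteratedDeriv_one] at h1 h2 h3 h4 h5
  norm_num at h1 h2 h3 h4 h5
  rw [h5, h4, h3, h2, h1]
  ring

end DerivEqMul
noncomputable def freudIntegral (m : ℕ) (c t : ℝ) : ℝ :=
  ∫ s in Ioi 0, s ^ c * Real.exp (-s ^ m + t * s)

namespace freudIntegral

variable {m : ℕ}

theorem integrand_isBigO_exp_neg (hm : 2 ≤ m) (c t : ℝ) :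
    (fun s : ℝ => s ^ c * Real.exp (-s ^ m + t * s)) =O[atTop]
      fun s => Real.exp (-(1 / 2) * s) := by
  have hdom : (fun s : ℝ => s ^ c * Real.exp (-s ^ m + t * s)) =O[atTop]
      fun s : ℝ => s ^ c * Real.exp (-(1 / 2) * s ^ (m : ℝ)) := by
    refine IsBigO.of_bound 1 ?_
    filter_upwards [eventually_ge_atTop (1 + 2 * |t|)] with s hs
    have hs1 : 1 ≤ s := by linarith [abs_nonneg t]
    have hsq : s ^ 2 ≤ s ^ m := pow_le_pow_right₀ hs1 hm
    have hts : t * s ≤ s ^ m / 2 := by nlinarith [le_abs_self t]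
    rw [one_mul, norm_mul, norm_mul, Real.rpow_natCast]
    gcongr
    simp only [Real.norm_eq_abs, abs_of_pos (Real.exp_pos _), Real.exp_le_exp]
    linarith
  exact hdom.trans (rpow_mul_exp_neg_mul_rpow_isLittleO_exp_neg c
    (by exact_mod_cast hm) (by norm_num)).isBigO

theorem integrableOn_integrand {c : ℝ} (hm : 2 ≤ m) (hc : -1 < c) (t : ℝ) :
    IntegrableOn (fun s : ℝ => s ^ c * Real.exp (-s ^ m + t * s)) (Ioi 0) := by
  have hexp : Continuous fun s : ℝ => Real.exp (-s ^ m + t * s) := by fun_prop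
  rw [← Ioc_union_Ioi_eq_Ioi zero_le_one, integrableOn_union,
    ← integrableOn_Icc_iff_integrableOn_Ioc]
  refine ⟨?_, integrable_of_isBigO_exp_neg (by norm_num) ?_ (integrand_isBigO_exp_neg hm c t)⟩
  · exact ((intervalIntegrable_iff_integrableOn_Icc_of_le zero_le_one).mp
      (intervalIntegral.intervalIntegrable_rpow' hc)).mul_continuousOn hexp.continuousOn
      isCompact_Icc
  · refine ContinuousOn.mul (fun s hs => ?_) hexp.continuousOn
    exact (Real.continuousAt_rpow_const s c
      (Or.inl (by linarith [mem_Ici.mp hs]))).continuousWithinAt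

theorem aestronglyMeasurable_integrand (c t : ℝ) :
    AEStronglyMeasurable (fun s : ℝ => s ^ c * Real.exp (-s ^ m + t * s))
      (volume.restrict (Ioi 0)) :=
  ((measurable_id.pow_const c).mul (by fun_prop)).aestronglyMeasurable

theorem hasDerivAt {c : ℝ} (hm : 2 ≤ m) (hc : -1 < c) (t : ℝ) :
    HasDerivAt (freudIntegral m c) (freudIntegral m (c + 1) t) t := by
  refine (hasDerivAt_integral_of_dominated_loc_of_deriv_le
    (F' := fun x s => s ^ (c + 1) * Real.exp (-s ^ m + x * s))
    (bound := fun s => s ^ (c + 1) * Real.exp (-s ^ m + (|t| + 1) * s))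
    (Metric.ball_mem_nhds t one_pos) (.of_forall fun x => aestronglyMeasurable_integrand c x)
    (integrableOn_integrand hm hc t) (aestronglyMeasurable_integrand (c + 1) t) ?_
    (integrableOn_integrand hm (by linarith) (|t| + 1)) ?_).2
  · refine (ae_restrict_iff' measurableSet_Ioi).2 (.of_forall fun s (hs : 0 < s) x hx => ?_)
    have hx : x ≤ |t| + 1 := by
      have := (abs_lt.mp (mem_ball_iff_norm.mp hx)).2
      linarith [le_abs_self t]
    rw [Real.norm_eq_abs, abs_of_nonneg (by positivity)]
    gcongr
  · refine (ae_restrict_iff' measurableSet_Ioi).2 (.of_forall fun s (hs : 0 < s) x _ => ?_)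
    have hexp : HasDerivAt (fun x => Real.exp (-s ^ m + x * s))
        (Real.exp (-s ^ m + x * s) * s) x :=
      (((hasDerivAt_id x).mul_const s).const_add _).exp.congr_deriv (by simp)
    refine (hexp.const_mul (s ^ c)).congr_deriv ?_
    rw [Real.rpow_add_one hs.ne']
    ring

theorem iteratedDeriv_eq {c : ℝ} (hm : 2 ≤ m) (hc : -1 < c) (n : ℕ) :
    iteratedDeriv n (freudIntegral m c) = freudIntegral m (c + n) := by
  induction n generalizing c with
  | zero => simp
  | succ n ih =>
    rw [iteratedDeriv_succ', funext fun t => (hasDerivAt hm hc t).deriv, ih (by linarith)]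
    push_cast
    ring_nf

theorem contDiff {c : ℝ} (hm : 2 ≤ m) (hc : -1 < c) {n : ℕ∞} :
    ContDiff ℝ n (freudIntegral m c) :=
  contDiff_of_differentiable_iteratedDeriv fun n _ => by
    rw [iteratedDeriv_eq hm hc]
    exact fun t => (hasDerivAt hm (by linarith [n.cast_nonneg (α := ℝ)]) t).differentiableAt

theorem pos {c : ℝ} (hm : 2 ≤ m) (hc : -1 < c) (t : ℝ) : 0 < freudIntegral m c t := by
  rw [freudIntegral, setIntegral_pos_iff_support_of_nonneg_ae _ (integrableOn_integrand hm hc t)]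
  · have hsupp :
        Ioi 0 ⊆ Function.support (fun s : ℝ => s ^ c * Real.exp (-s ^ m + t * s)) ∩ Ioi 0 :=
      fun s (hs : 0 < s) => ⟨(by positivity : s ^ c * Real.exp (-s ^ m + t * s) ≠ 0), hs⟩
    exact (by simp : (0 : ENNReal) < volume (Ioi (0 : ℝ))).trans_le (measure_mono hsupp)
  · filter_upwards [ae_restrict_mem measurableSet_Ioi] with s (hs : 0 < s)
    positivity

theorem hasDerivAt_rpow_mul_exp {s : ℝ} (hs : 0 < s) (c t : ℝ) :
    HasDerivAt (fun s : ℝ => s ^ (c + 1) * Real.exp (-s ^ m + t * s))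
      ((c + 1) * (s ^ c * Real.exp (-s ^ m + t * s))
        + t * (s ^ (c + 1) * Real.exp (-s ^ m + t * s))
        - m * (s ^ (c + m) * Real.exp (-s ^ m + t * s))) s := by
  have hpow : HasDerivAt (fun s : ℝ => s ^ (c + 1)) ((c + 1) * s ^ c) s := by
    simpa using Real.hasDerivAt_rpow_const (p := c + 1) (Or.inl hs.ne')
  have hexp := (((hasDerivAt_pow m s).neg).add ((hasDerivAt_id s).const_mul t)).exp
  refine (hpow.mul hexp).congr_deriv ?_
  have hmul : s ^ (c + 1) * (m * s ^ (m - 1)) = m * s ^ (c + m) := by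
    rcases m with _ | k
    · simp
    · rw [Nat.add_sub_cancel, ← Real.rpow_natCast, mul_left_comm, ← Real.rpow_add hs]
      push_cast
      ring_nf
  simp only [id, mul_one]
  linear_combination (-Real.exp (-s ^ m + t * s)) * hmul

theorem recurrence {c : ℝ} (hm : 2 ≤ m) (hc : -1 < c) (t : ℝ) :
    m * freudIntegral m (c + m) t
      = t * freudIntegral m (c + 1) t + (c + 1) * freudIntegral m c t := by
  have hcm : -1 < c + m := by linarith [m.cast_nonneg (α := ℝ)]
  have hcont : ContinuousWithinAt (fun s : ℝ => s ^ (c + 1) * Real.exp (-s ^ m + t * s))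
      (Ici 0) 0 :=
    ((Real.continuousAt_rpow_const 0 (c + 1) (Or.inr (by linarith))).mul
      (by fun_prop)).continuousWithinAt
  have hlim : Tendsto (fun s : ℝ => s ^ (c + 1) * Real.exp (-s ^ m + t * s)) atTop (𝓝 0) :=
    (integrand_isBigO_exp_neg hm (c + 1) t).trans_tendsto <|
      Real.tendsto_exp_atBot.comp (tendsto_id.const_mul_atTop_of_neg (by norm_num))
  have hA := (integrableOn_integrand hm hc t).const_mul (c + 1)
  have hB := (integrableOn_integrand (c := c + 1) hm (by linarith) t).const_mul t
  have hC := (integrableOn_integrand hm hcm t).const_mul (m : ℝ)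
  have hftc := integral_Ioi_of_hasDerivAt_of_tendsto hcont
    (fun s (hs : 0 < s) => hasDerivAt_rpow_mul_exp hs c t) ((hA.add hB).sub hC) hlim
  rw [integral_sub (by exact hA.add hB) hC, integral_add hA hB, integral_const_mul,
    integral_const_mul, integral_const_mul, Real.zero_rpow (by linarith), zero_mul,
    sub_zero] at hftc
  simp only [freudIntegral]
  linarith

theorem integral_abs_rpow_mul_exp (c t : ℝ) :
    ∫ x : ℝ, |x| ^ (2 * c + 1) * Real.exp (-x ^ (2 * m) + t * x ^ 2) = freudIntegral m c t := by
  have hsub := integral_comp_rpow_Ioi (fun s : ℝ => s ^ c * Real.exp (-s ^ m + t * s))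
    two_ne_zero
  have heven : ∀ x : ℝ, |x| ^ (2 * c + 1) * Real.exp (-x ^ (2 * m) + t * x ^ 2)
      = (fun y : ℝ => y ^ (2 * c + 1) * Real.exp (-y ^ (2 * m) + t * y ^ 2)) |x| := by
    intro x
    simp only [pow_mul, sq_abs]
  have hsq : ∀ x ∈ Ioi (0 : ℝ), (|(2 : ℝ)| * x ^ ((2 : ℝ) - 1)) •
      (fun s : ℝ => s ^ c * Real.exp (-s ^ m + t * s)) (x ^ (2 : ℝ))
        = 2 * (x ^ (2 * c + 1) * Real.exp (-x ^ (2 * m) + t * x ^ 2)) := by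
    intro x (hx : 0 < x)
    have hsqc : (x ^ 2) ^ c = x ^ (2 * c) := by
      rw [← Real.rpow_natCast, ← Real.rpow_mul hx.le, Nat.cast_ofNat]
    dsimp only
    rw [Real.rpow_two, hsqc, ← pow_mul, Real.rpow_add_one hx.ne', smul_eq_mul]
    norm_num
    ring
  rw [integral_congr_ae (.of_forall heven),
    integral_comp_abs (f := fun y => y ^ (2 * c + 1) * Real.exp (-y ^ (2 * m) + t * y ^ 2)),
    freudIntegral, ← hsub,
    setIntegral_congr_fun measurableSet_Ioi hsq, integral_const_mul]

end freudIntegral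

/-- For the generalised decic Freud weight `|x|^{2λ+1} exp(−x¹⁰ + t x²)`: the first moment
equals `μ₀(t;λ) = ∫_0^∞ s^λ exp(−s⁵ + ts) ds`; `μ₀` satisfies the fifth-order equation
`μ₀⁽⁵⁾ − (t/5)μ₀' − ((λ+1)/5)μ₀ = 0`; and `β₁ = μ₀'/μ₀` satisfies
`β₁'''' + 5β₁β₁''' + 10(β₁'+β₁²)β₁'' + 15β₁(β₁')² + 10β₁³β₁' + β₁⁵ − (t/5)β₁ = (λ+1)/5`. -/
theorem decic_freud_moment_and_beta_one (l : ℝ) (hl : -1 < l)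
    (μ₀ β₁ : ℝ → ℝ)
    (hμ₀ : ∀ t : ℝ, μ₀ t = ∫ s in Set.Ioi (0 : ℝ), s ^ l * Real.exp (-s ^ 5 + t * s))
    (hβ₁ : ∀ t : ℝ, β₁ t = deriv μ₀ t / μ₀ t) :
    (∀ t : ℝ, (∫ x : ℝ, |x| ^ (2 * l + 1) * Real.exp (-x ^ 10 + t * x ^ 2)) = μ₀ t) ∧
    (∀ t : ℝ, iteratedDeriv 5 μ₀ t - t / 5 * deriv μ₀ t - (l + 1) / 5 * μ₀ t = 0) ∧
    (∀ t : ℝ, iteratedDeriv 4 β₁ t + 5 * β₁ t * iteratedDeriv 3 β₁ t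
        + 10 * (deriv β₁ t + (β₁ t) ^ 2) * iteratedDeriv 2 β₁ t
        + 15 * β₁ t * (deriv β₁ t) ^ 2 + 10 * (β₁ t) ^ 3 * deriv β₁ t + (β₁ t) ^ 5
        - t / 5 * β₁ t = (l + 1) / 5) := by
  obtain rfl : μ₀ = freudIntegral 5 l := funext hμ₀
  have h5 : 2 ≤ 5 := by norm_num
  have hpos := freudIntegral.pos h5 hl
  have hderiv : deriv (freudIntegral 5 l) = freudIntegral 5 (l + 1) :=
    funext fun t => (freudIntegral.hasDerivAt h5 hl t).deriv
  have hode (t : ℝ) : iteratedDeriv 5 (freudIntegral 5 l) t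
      = t / 5 * deriv (freudIntegral 5 l) t + (l + 1) / 5 * freudIntegral 5 l t := by
    have := freudIntegral.recurrence h5 hl t
    rw [freudIntegral.iteratedDeriv_eq h5 hl, hderiv]
    push_cast at this ⊢
    linarith
  have hβ_smooth : ContDiff ℝ 4 β₁ := by
    rw [funext hβ₁, hderiv]
    exact (freudIntegral.contDiff h5 (by linarith)).div (freudIntegral.contDiff h5 hl)
      fun t => (hpos t).ne'
  have hμ₀' : deriv (freudIntegral 5 l) = β₁ * freudIntegral 5 l :=
    funext fun t => by rw [Pi.mul_apply, hβ₁, div_mul_cancel₀ _ (hpos t).ne']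
  refine ⟨fun t => by simpa using freudIntegral.integral_abs_rpow_mul_exp (m := 5) l t,
    fun t => by rw [hode]; ring, fun t => mul_right_cancel₀ (hpos t).ne' ?_⟩
  have hbell := iteratedDeriv_five_eq_of_deriv_eq_mul hβ_smooth
    (freudIntegral.contDiff h5 hl) hμ₀' t
  rw [hode, hμ₀', Pi.mul_apply] at hbell
  linear_combination -hbell
end
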